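/- arXiv:1803.04529 — 6 statements merged into one kernel-verified Lean document; each statement's English description precedes it below -/
import Mathlib

section
/- For all integers n > 2 and r > 0, the r-derangement numbers satisfy the recurrence D_r(n) = r·D_{r-1}(n-1) + (n-1)·D_r(n-2) + (n+r-1)·D_r(n-1). -/
/-- The `r`-derangement number `D_r(n)`: the number of fixed-point-free permutations
of `n + r` elements such that the first `r` (distinguished) elements lie in pairwise
distinct cycles of the cycle decomposition. -/
noncomputable def rDerangement (r n : ℕ) : ℕ :=
  Nat.card {σ : Equiv.Perm (Fin (n + r)) //
    (∀ x, σ x ≠ x) ∧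
    ∀ i j : Fin (n + r), (i : ℕ) < r → (j : ℕ) < r → i ≠ j → ¬ σ.SameCycle i j}

set_option linter.unusedSectionVars false
set_option linter.unusedVariables false

open Equiv Function

namespace RDAux



variable {α β : Type*}

/-- The distinguished-elements pairwise-distinct-cycles condition. -/
def Cond (D : Set α) (f : Perm α) : Prop :=
  ∀ i ∈ D, ∀ j ∈ D, i ≠ j → ¬ f.SameCycle i j

/-- The set of `D`-distinguished derangements. -/
def rdSet (α : Type*) (D : Set α) : Set (Perm α) :=
  {f | (∀ x, f x ≠ x) ∧ Cond D f}

theorem mem_rdSet {D : Set α} {f : Perm α} :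
    f ∈ rdSet α D ↔ (∀ x, f x ≠ x) ∧ Cond D f := Iff.rfl

/-- `permCongr` as a multiplicative equivalence. -/
def permCongrMul (e : α ≃ β) : Perm α ≃* Perm β :=
  { e.permCongr with
    map_mul' := fun f g => by
      ext x
      simp [Perm.mul_apply] }

theorem permCongr_zpow (e : α ≃ β) (f : Perm α) (n : ℤ) :
    (e.permCongr f) ^ n = e.permCongr (f ^ n) :=
  (map_zpow (permCongrMul e) f n).symm

theorem sameCycle_permCongr (e : α ≃ β) (f : Perm α) {x y : α} :
    (e.permCongr f).SameCycle (e x) (e y) ↔ f.SameCycle x y := by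
  constructor
  · rintro ⟨n, h⟩
    refine ⟨n, ?_⟩
    rw [permCongr_zpow] at h
    simpa using h
  · rintro ⟨n, h⟩
    refine ⟨n, ?_⟩
    rw [permCongr_zpow]
    simp [h]

/-- Congruence for `rdSet`. -/
def rdSetCongr (e : α ≃ β) (D : Set α) : rdSet α D ≃ rdSet β (e '' D) := by
  refine e.permCongr.subtypeEquiv fun f => ?_
  rw [mem_rdSet, mem_rdSet]
  constructor
  · rintro ⟨h1, h2⟩
    constructor
    · intro y
      simp only [permCongr_apply]
      intro hy
      exact h1 (e.symm y) (by simpa using congrArg e.symm hy)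
    · rintro _ ⟨i, hi, rfl⟩ _ ⟨j, hj, rfl⟩ hne hsc
      exact h2 i hi j hj (fun h => hne (by rw [h])) ((sameCycle_permCongr e f).mp hsc)
  · rintro ⟨h1, h2⟩
    constructor
    · intro x hx
      exact h1 (e x) (by simp [hx])
    · intro i hi j hj hne hsc
      exact h2 (e i) ⟨i, hi, rfl⟩ (e j) ⟨j, hj, rfl⟩ (fun h => hne (e.injective h))
        ((sameCycle_permCongr e f).mpr hsc)



variable {α : Type*} [DecidableEq α]

instance instFiniteOption' [Finite α] : Finite (Option α) :=
  Finite.of_equiv (α ⊕ PUnit.{1}) (Equiv.optionEquivSumPUnit α).symm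

theorem decomp_apply_none (a : α) (f : Perm α) :
    (Perm.decomposeOption.symm (some a, f)) none = some a := by
  simp [Perm.decomposeOption, Perm.mul_apply]

theorem decomp_apply_some_of_ne {a : α} {f : Perm α} {x : α} (h : f x ≠ a) :
    (Perm.decomposeOption.symm (some a, f)) (some x) = some (f x) := by
  simp only [Perm.decomposeOption, coe_fn_symm_mk, Perm.mul_apply, optionCongr_apply,
    Option.map_some]
  exact swap_apply_of_ne_of_ne (Option.some_ne_none _) (by simpa using h)

theorem decomp_apply_some_of_eq {a : α} {f : Perm α} {x : α} (h : f x = a) :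
    (Perm.decomposeOption.symm (some a, f)) (some x) = none := by
  simp only [Perm.decomposeOption, coe_fn_symm_mk, Perm.mul_apply, optionCongr_apply,
    Option.map_some, h]
  exact swap_apply_right _ _

theorem sameCycle_decomp [Finite α] (a : α) (f : Perm α) {x y : α} :
    (Perm.decomposeOption.symm (some a, f)).SameCycle (some x) (some y) ↔ f.SameCycle x y := by
  set F := Perm.decomposeOption.symm (some a, f) with hF
  constructor
  · intro h
    obtain ⟨k, -, hk⟩ := h.exists_pow_eq'
    clear h
    induction k using Nat.strong_induction_on generalizing x with
    | _ k ih =>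
      match k with
      | 0 =>
        simp only [pow_zero, Perm.coe_one, id_eq, Option.some.injEq] at hk
        exact hk ▸ Perm.SameCycle.rfl
      | (k + 1) =>
        rw [pow_succ, Perm.mul_apply] at hk
        by_cases hfx : f x = a
        · rw [decomp_apply_some_of_eq hfx] at hk
          match k with
          | 0 => simp at hk
          | (k' + 1) =>
            rw [pow_succ, Perm.mul_apply, decomp_apply_none] at hk
            have h1 : f.SameCycle a y := ih k' (by omega) hk
            exact (Perm.SameCycle.rfl.apply_right (f := f) (x := x)).trans (hfx ▸ h1)
        · rw [decomp_apply_some_of_ne hfx] at hk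
          have h1 : f.SameCycle (f x) y := ih k (by omega) hk
          exact (Perm.SameCycle.rfl.apply_right (f := f) (x := x)).trans h1
  · intro h
    obtain ⟨k, -, hk⟩ := h.exists_pow_eq'
    clear h
    subst hk
    induction k with
    | zero => simp only [pow_zero, Perm.coe_one, id_eq]; exact Perm.SameCycle.rfl
    | succ k ih =>
      have step : F.SameCycle (some ((f ^ k) x)) (some (f ((f ^ k) x))) := by
        by_cases hfu : f ((f ^ k) x) = a
        · have s1 : F.SameCycle (some ((f ^ k) x)) none := by
            rw [← decomp_apply_some_of_eq hfu]
            exact Perm.SameCycle.rfl.apply_right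
          have s2 : F.SameCycle none (some (f ((f ^ k) x))) := by
            rw [hfu, ← decomp_apply_none a f]
            exact Perm.SameCycle.rfl.apply_right
          exact s1.trans s2
        · rw [← decomp_apply_some_of_ne hfu]
          exact Perm.SameCycle.rfl.apply_right
      have h2 : (f ^ (k + 1)) x = f ((f ^ k) x) := by
        rw [pow_succ', Perm.mul_apply]
      rw [h2]
      exact ih.trans step
  

theorem fixedFree_decomp_iff [DecidableEq α] (a : α) (f : Perm α) :
    (∀ z, (Perm.decomposeOption.symm (some a, f)) z ≠ z) ↔ (∀ x, f x = x → x = a) := by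
  constructor
  · intro h x hfx
    by_contra hxa
    have := h (some x)
    rw [decomp_apply_some_of_ne (fun hc => hxa (hfx ▸ hc.symm ▸ rfl))] at this
    · exact this (by rw [hfx])
  · intro h z
    match z with
    | none => rw [decomp_apply_none]; simp
    | some x =>
      by_cases hfx : f x = a
      · rw [decomp_apply_some_of_eq hfx]; simp
      · rw [decomp_apply_some_of_ne hfx]
        intro hc
        have : f x = x := by simpa using hc
        exact hfx ((h x this) ▸ this)

theorem mem_rdSet_decomp_iff [DecidableEq α] [Finite α] (D : Set α) (o : Option α) (f : Perm α) :
    Perm.decomposeOption.symm (o, f) ∈ rdSet (Option α) (some '' D) ↔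
      ∃ a : α, o = some a ∧ ((∀ x, f x = x → x = a) ∧ Cond D f) := by
  match o with
  | none =>
    simp only [mem_rdSet]
    constructor
    · rintro ⟨h1, -⟩
      exfalso
      refine h1 none ?_
      simp [Perm.decomposeOption, Perm.mul_apply]
    · rintro ⟨a, h, -⟩
      exact absurd h (by simp)
  | some a =>
    simp only [mem_rdSet]
    constructor
    · rintro ⟨h1, h2⟩
      refine ⟨a, rfl, (fixedFree_decomp_iff a f).mp h1, ?_⟩
      intro i hi j hj hne hsc
      exact h2 (some i) ⟨i, hi, rfl⟩ (some j) ⟨j, hj, rfl⟩ (by simpa using hne)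
        ((sameCycle_decomp a f).mpr hsc)
    · rintro ⟨a', ha', h1, h2⟩
      obtain rfl : a = a' := by simpa using ha'
      refine ⟨(fixedFree_decomp_iff a f).mpr h1, ?_⟩
      rintro _ ⟨i, hi, rfl⟩ _ ⟨j, hj, rfl⟩ hne hsc
      exact h2 i hi j hj (by simpa using hne) ((sameCycle_decomp a f).mp hsc)

section Fiber
variable [DecidableEq α]

private theorem hinv_aux {f : Perm α} {a : α} (hfa : f a = a) :
    ∀ x : α, x ≠ a ↔ f x ≠ a := by
  intro x
  constructor
  · intro hx hc
    exact hx (f.injective (by rw [hc, hfa]))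
  · intro hx hc
    exact hx (by rw [hc, hfa])

/-- The fiber with a fixed point at `a` is equivalent to distinguished derangements of the
complement of `a`. -/
def fiberFixedEquiv (a : α) (D : Set α) :
    {f : Perm α // ((∀ x, f x = x → x = a) ∧ Cond D f) ∧ f a = a} ≃
      rdSet {x : α // x ≠ a} (Subtype.val ⁻¹' D) where
  toFun := fun f =>
    ⟨f.1.subtypePerm (fun x => (hinv_aux f.2.2 x).symm), by
      obtain ⟨f, ⟨hfix, hcond⟩, hfa⟩ := f
      rw [mem_rdSet]
      constructor
      · rintro ⟨x, hx⟩ hc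
        rw [Subtype.ext_iff] at hc
        simp only [Perm.subtypePerm_apply] at hc
        exact hx (hfix x hc)
      · intro i hi j hj hne hsc
        rw [Perm.sameCycle_subtypePerm] at hsc
        exact hcond i.1 hi j.1 hj (fun h => hne (Subtype.ext h)) hsc⟩
  invFun := fun g =>
    ⟨Perm.ofSubtype g.1, by
      obtain ⟨g, hg⟩ := g
      rw [mem_rdSet] at hg
      obtain ⟨hder, hcond⟩ := hg
      refine ⟨⟨?_, ?_⟩, ?_⟩
      · intro x hx
        by_contra hxa
        have h1 : Perm.ofSubtype g x = (g ⟨x, hxa⟩ : α) := Perm.ofSubtype_apply_of_mem g hxa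
        rw [hx] at h1
        exact hder ⟨x, hxa⟩ (Subtype.ext h1.symm)
      · intro i hi j hj hne hsc
        by_cases hia : i = a
        · subst hia
          exact hne (hsc.eq_of_left (Perm.ofSubtype_apply_of_not_mem g (by simp)))
        · by_cases hja : j = a
          · subst hja
            exact hne (hsc.eq_of_right (Perm.ofSubtype_apply_of_not_mem g (by simp)))
          · have hsc' : (Perm.ofSubtype g).SameCycle i j := hsc
            rw [show i = ((⟨i, hia⟩ : {x : α // x ≠ a}) : α) from rfl,
              show j = ((⟨j, hja⟩ : {x : α // x ≠ a}) : α) from rfl,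
              ← Perm.sameCycle_subtypePerm (h := Perm.ofSubtype_apply_mem_iff_mem g),
              Perm.subtypePerm_ofSubtype] at hsc'
            exact hcond ⟨i, hia⟩ hi ⟨j, hja⟩ hj (fun h => hne (congrArg Subtype.val h)) hsc'
      · exact Perm.ofSubtype_apply_of_not_mem g (by simp)⟩
  left_inv := fun f => by
    apply Subtype.ext
    exact Perm.ofSubtype_subtypePerm (fun x => (hinv_aux f.2.2 x).symm) (fun x hx => fun hxa => hx (hxa ▸ f.2.2))
  right_inv := fun g => by
    apply Subtype.ext
    exact Perm.subtypePerm_ofSubtype g.1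

/-- The fiber with no fixed point is the full distinguished derangement set. -/
def fiberMovedEquiv (a : α) (D : Set α) :
    {f : Perm α // ((∀ x, f x = x → x = a) ∧ Cond D f) ∧ ¬ f a = a} ≃ rdSet α D :=
  subtypeEquivRight fun f => by
    rw [mem_rdSet]
    constructor
    · rintro ⟨⟨hfix, hcond⟩, hfa⟩
      exact ⟨fun x hc => hfa ((hfix x hc) ▸ hc), hcond⟩
    · rintro ⟨hder, hcond⟩
      exact ⟨⟨fun x hc => absurd hc (hder x), hcond⟩, hder a⟩

open scoped Classical in
/-- Splitting a fiber according to whether `a` is a fixed point. -/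
def fiberEquiv (a : α) (D : Set α) :
    {f : Perm α // (∀ x, f x = x → x = a) ∧ Cond D f} ≃
      (rdSet {x : α // x ≠ a} (Subtype.val ⁻¹' D) ⊕ rdSet α D) :=
  calc
    {f : Perm α // (∀ x, f x = x → x = a) ∧ Cond D f} ≃
        {g : {f : Perm α // (∀ x, f x = x → x = a) ∧ Cond D f} // g.1 a = a} ⊕
        {g : {f : Perm α // (∀ x, f x = x → x = a) ∧ Cond D f} // ¬ g.1 a = a} :=
      (Equiv.sumCompl _).symm
    _ ≃ {f : Perm α // ((∀ x, f x = x → x = a) ∧ Cond D f) ∧ f a = a} ⊕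
        {f : Perm α // ((∀ x, f x = x → x = a) ∧ Cond D f) ∧ ¬ f a = a} :=
      Equiv.sumCongr
        (subtypeSubtypeEquivSubtypeInter
          (fun f : Perm α => (∀ x, f x = x → x = a) ∧ Cond D f) (fun f => f a = a))
        (subtypeSubtypeEquivSubtypeInter
          (fun f : Perm α => (∀ x, f x = x → x = a) ∧ Cond D f) (fun f => ¬ f a = a))
    _ ≃ (rdSet {x : α // x ≠ a} (Subtype.val ⁻¹' D) ⊕ rdSet α D) :=
      Equiv.sumCongr (fiberFixedEquiv a D) (fiberMovedEquiv a D)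

end Fiber

section Key
variable [Fintype α] [DecidableEq α]

/-- The key recursion equivalence for distinguished derangements. -/
def keyEquiv (D : Set α) :
    rdSet (Option α) (some '' D) ≃
      Σ a : α, (rdSet {x : α // x ≠ a} (Subtype.val ⁻¹' D) ⊕ rdSet α D) :=
  calc
    rdSet (Option α) (some '' D)
        ≃ {p : Option α × Perm α //
            ∃ a, p.1 = some a ∧ ((∀ x, p.2 x = x → x = a) ∧ Cond D p.2)} :=
      Perm.decomposeOption.subtypeEquiv fun F => by
        have h := mem_rdSet_decomp_iff D (Perm.decomposeOption F).1 (Perm.decomposeOption F).2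
        rw [show ((Perm.decomposeOption F).1, (Perm.decomposeOption F).2) =
          Perm.decomposeOption F from rfl, Equiv.symm_apply_apply] at h
        exact h
    _ ≃ Σ o : Option α,
          {f : Perm α // ∃ a, o = some a ∧ ((∀ x, f x = x → x = a) ∧ Cond D f)} :=
      subtypeProdEquivSigmaSubtype (α := Option α) (β := Perm α)
        (fun o f => ∃ a, o = some a ∧ ((∀ x, f x = x → x = a) ∧ Cond D f))
    _ ≃ Σ a : α,
          {f : Perm α // ∃ a', some a = some a' ∧ ((∀ x, f x = x → x = a') ∧ Cond D f)} :=
      sigmaOptionEquivOfSome _ (by rintro ⟨f, a, h, -⟩; cases h)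
    _ ≃ Σ a : α, {f : Perm α // (∀ x, f x = x → x = a) ∧ Cond D f} :=
      sigmaCongrRight fun a => subtypeEquivRight fun f => by
        constructor
        · rintro ⟨a', h, hh⟩
          obtain rfl : a = a' := by simpa using h
          exact hh
        · intro h
          exact ⟨a, rfl, h⟩
    _ ≃ Σ a : α, (rdSet {x : α // x ≠ a} (Subtype.val ⁻¹' D) ⊕ rdSet α D) :=
      sigmaCongrRight fun a => fiberEquiv a D

theorem card_sigma' {ι : Type*} [Fintype ι] (f : ι → Type*) [∀ i, Finite (f i)] :
    Nat.card (Σ i, f i) = ∑ i, Nat.card (f i) := by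
  classical
  letI : ∀ i, Fintype (f i) := fun i => Fintype.ofFinite _
  rw [Nat.card_eq_fintype_card, Fintype.card_sigma]
  exact Finset.sum_congr rfl fun i _ => (Nat.card_eq_fintype_card).symm

theorem card_rdSet_option (D : Set α) :
    Nat.card (rdSet (Option α) (some '' D)) =
      (∑ a : α, Nat.card (rdSet {x : α // x ≠ a} (Subtype.val ⁻¹' D))) +
        Fintype.card α * Nat.card (rdSet α D) := by
  rw [Nat.card_congr (keyEquiv D), card_sigma']
  simp only [Nat.card_sum]
  rw [Finset.sum_add_distrib, Finset.sum_const, smul_eq_mul, Finset.card_univ]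

end Key

section Count

/-- Normal form: the count of distinguished derangements with `k` distinguished points among `m`
total points. -/
noncomputable def cnt (k m : ℕ) : ℕ :=
  Nat.card (rdSet (Fin m) {i : Fin m | (i : ℕ) < k})

/-- An initial segment of `Fin m` has `k` elements. -/
def initSegEquiv (m k : ℕ) (h : k ≤ m) : {i : Fin m | (i : ℕ) < k} ≃ Fin k where
  toFun i := ⟨(i : Fin m), i.2⟩
  invFun j := ⟨⟨(j : ℕ), lt_of_lt_of_le j.2 h⟩, j.2⟩
  left_inv i := by ext; rfl
  right_inv j := by ext; rfl

theorem card_initSeg {m k : ℕ} (h : k ≤ m) :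
    Nat.card {i : Fin m | (i : ℕ) < k} = k := by
  rw [Nat.card_congr (initSegEquiv m k h)]
  simp

theorem exists_equiv_initSeg [Fintype α] [DecidableEq α] (D : Set α) [DecidablePred (· ∈ D)] :
    ∃ e : α ≃ Fin (Fintype.card α),
      e '' D = {i : Fin (Fintype.card α) | (i : ℕ) < Fintype.card D} := by
  classical
  set m := Fintype.card α with hm
  set k := Fintype.card D with hk
  have hkm : k ≤ m := Fintype.card_subtype_le _
  have hcompl : Fintype.card {x : α // x ∉ D} = m - k := by
    rw [hk, hm]
    exact Fintype.card_subtype_compl _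
  let e0 : {x : α // x ∈ D} ≃ Fin k := Fintype.equivFinOfCardEq rfl
  let e1 : {x : α // x ∉ D} ≃ Fin (m - k) := Fintype.equivFinOfCardEq hcompl
  let e : α ≃ Fin m :=
    (Equiv.sumCompl (· ∈ D)).symm.trans ((Equiv.sumCongr e0 e1).trans
      (finSumFinEquiv.trans (finCongr (Nat.add_sub_cancel' hkm))))
  have he_mem : ∀ x (hx : x ∈ D), ((e x : ℕ)) = (e0 ⟨x, hx⟩ : ℕ) := by
    intro x hx
    have h1 : (Equiv.sumCompl (· ∈ D)).symm x = Sum.inl ⟨x, hx⟩ := by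
      rw [Equiv.symm_apply_eq]
      simp
    simp only [e, Equiv.trans_apply, h1, Equiv.sumCongr_apply, Sum.map_inl,
      finSumFinEquiv_apply_left, finCongr_apply]
    rfl
  have he_not : ∀ x (hx : x ∉ D), ((e x : ℕ)) = k + (e1 ⟨x, hx⟩ : ℕ) := by
    intro x hx
    have h1 : (Equiv.sumCompl (· ∈ D)).symm x = Sum.inr ⟨x, hx⟩ := by
      rw [Equiv.symm_apply_eq]
      simp
    simp only [e, Equiv.trans_apply, h1, Equiv.sumCongr_apply, Sum.map_inr,
      finSumFinEquiv_apply_right, finCongr_apply]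
    rfl
  refine ⟨e, ?_⟩
  ext j
  simp only [Set.mem_image, Set.mem_setOf_eq]
  constructor
  · rintro ⟨x, hx, rfl⟩
    rw [he_mem x hx]
    exact (e0 ⟨x, hx⟩).2
  · intro hj
    by_cases hx : e.symm j ∈ D
    · exact ⟨e.symm j, hx, e.apply_symm_apply j⟩
    · exfalso
      have := he_not _ hx
      rw [e.apply_symm_apply] at this
      omega

theorem card_rdSet_eq [Fintype α] [DecidableEq α] (D : Set α) :
    Nat.card (rdSet α D) = cnt (Nat.card D) (Nat.card α) := by
  classical
  obtain ⟨e, he⟩ := exists_equiv_initSeg D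
  have h1 : Nat.card (rdSet α D) = Nat.card (rdSet (Fin (Fintype.card α)) (e '' D)) :=
    Nat.card_congr (rdSetCongr e D)
  have h2 : Nat.card D = Fintype.card D := Nat.card_eq_fintype_card
  have h3 : Nat.card α = Fintype.card α := Nat.card_eq_fintype_card
  rw [h1, he, h2, h3]
  rfl

end Count

section Link

theorem rDerangement_eq_cnt (r n : ℕ) : rDerangement r n = cnt r (n + r) := by
  apply Nat.card_congr
  apply subtypeEquivRight
  intro σ
  simp only [mem_rdSet, Cond, Set.mem_setOf_eq]
  constructor
  · rintro ⟨h1, h2⟩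
    exact ⟨h1, fun i hi j hj => h2 i j hi hj⟩
  · rintro ⟨h1, h2⟩
    exact ⟨h1, fun i j hi hj => h2 i hi j hj⟩

theorem cnt_eq_rDerangement {r m : ℕ} (h : r ≤ m) : cnt r m = rDerangement r (m - r) := by
  rw [rDerangement_eq_cnt]
  congr 1
  omega

/-- The preimage of `D` in the complement of `a`. -/
def preimDiffEquiv {α : Type*} (D : Set α) (a : α) :
    (Subtype.val ⁻¹' D : Set {x : α // x ≠ a}) ≃ ↥(D \ {a}) where
  toFun x := ⟨x.1.1, x.2, x.1.2⟩
  invFun x := ⟨⟨x.1, x.2.2⟩, x.2.1⟩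
  left_inv x := rfl
  right_inv x := rfl

theorem card_ne (m : ℕ) (a : Fin m) : Nat.card {x : Fin m // x ≠ a} = m - 1 := by
  rw [Nat.card_eq_fintype_card]
  have h := Fintype.card_subtype_compl (p := fun x : Fin m => x = a)
  simp only [Fintype.card_subtype_eq, Fintype.card_fin] at h
  exact h

theorem card_fiber (m r : ℕ) (hrm : r ≤ m) (a : Fin m) :
    Nat.card (rdSet {x : Fin m // x ≠ a} (Subtype.val ⁻¹' {i : Fin m | (i : ℕ) < r})) =
      cnt (if (a : ℕ) < r then r - 1 else r) (m - 1) := by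
  classical
  rw [card_rdSet_eq]
  have h2 : Nat.card {x : Fin m // x ≠ a} = m - 1 := card_ne m a
  have h1 : Nat.card (Subtype.val ⁻¹' {i : Fin m | (i : ℕ) < r} : Set {x : Fin m // x ≠ a}) =
      if (a : ℕ) < r then r - 1 else r := by
    rw [Nat.card_congr (preimDiffEquiv _ a), Nat.card_coe_set_eq]
    by_cases ha : (a : ℕ) < r
    · rw [if_pos ha, Set.ncard_diff_singleton_of_mem (by exact ha),
        ← Nat.card_coe_set_eq, card_initSeg hrm]
    · rw [if_neg ha, Set.diff_singleton_eq_self (by exact ha),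
        ← Nat.card_coe_set_eq, card_initSeg hrm]
  rw [h1, h2]

end Link

section Main

theorem main_aux (n' r' : ℕ) :
    rDerangement (r' + 1) (n' + 3) =
      (r' + 1) * rDerangement r' (n' + 2) + (n' + 2) * rDerangement (r' + 1) (n' + 1) +
        (n' + r' + 3) * rDerangement (r' + 1) (n' + 2) := by
  classical
  set m : ℕ := n' + r' + 3 with hm
  set DD : Set (Fin m) := {i : Fin m | (i : ℕ) < r' + 1} with hDD
  -- LHS as a card over `Option (Fin m)`
  have hcard1 : Nat.card (Option (Fin m)) = m + 1 := by
    simp [Nat.card_eq_fintype_card]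
  have hcard2 : Nat.card (some '' DD : Set (Option (Fin m))) = r' + 1 := by
    rw [Nat.card_congr (Equiv.Set.image _ DD (Option.some_injective _)).symm]
    exact card_initSeg (by omega)
  have hB : Nat.card (rdSet (Option (Fin m)) (some '' DD)) = cnt (r' + 1) (m + 1) := by
    rw [card_rdSet_eq, hcard1, hcard2]
  have hL : rDerangement (r' + 1) (n' + 3) =
      Nat.card (rdSet (Option (Fin m)) (some '' DD)) := by
    rw [rDerangement_eq_cnt, hB, show n' + 3 + (r' + 1) = m + 1 by omega]
  rw [hL, card_rdSet_option DD]
  -- the sum over fibers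
  have step : ∀ a : Fin m,
      Nat.card (rdSet {x : Fin m // x ≠ a} (Subtype.val ⁻¹' DD)) =
        if (a : ℕ) < r' + 1 then rDerangement r' (n' + 2) else rDerangement (r' + 1) (n' + 1) := by
    intro a
    rw [card_fiber m (r' + 1) (by omega) a]
    by_cases ha : (a : ℕ) < r' + 1
    · rw [if_pos ha, if_pos ha, show r' + 1 - 1 = r' by omega,
        cnt_eq_rDerangement (show r' ≤ m - 1 by omega), show m - 1 - r' = n' + 2 by omega]
    · rw [if_neg ha, if_neg ha, cnt_eq_rDerangement (show r' + 1 ≤ m - 1 by omega),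
        show m - 1 - (r' + 1) = n' + 1 by omega]
  have hc1 : (Finset.univ.filter fun a : Fin m => (a : ℕ) < r' + 1).card = r' + 1 := by
    rw [← Fintype.card_subtype, ← Nat.card_eq_fintype_card]
    exact card_initSeg (by omega)
  have hc2 : (Finset.univ.filter fun a : Fin m => ¬ (a : ℕ) < r' + 1).card = n' + 2 := by
    have h := Finset.card_filter_add_card_filter_not
      (s := (Finset.univ : Finset (Fin m))) (p := fun a : Fin m => (a : ℕ) < r' + 1)
    rw [hc1, Finset.card_univ, Fintype.card_fin] at h
    omega
  have hsum : (∑ a : Fin m, Nat.card (rdSet {x : Fin m // x ≠ a} (Subtype.val ⁻¹' DD))) =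
      (r' + 1) * rDerangement r' (n' + 2) + (n' + 2) * rDerangement (r' + 1) (n' + 1) := by
    rw [Finset.sum_congr rfl (fun a _ => step a), Finset.sum_ite, Finset.sum_const,
      Finset.sum_const, hc1, hc2, smul_eq_mul, smul_eq_mul]
  have hthird : Nat.card (rdSet (Fin m) DD) = rDerangement (r' + 1) (n' + 2) := by
    rw [card_rdSet_eq, show Nat.card DD = r' + 1 from card_initSeg (by omega),
      show Nat.card (Fin m) = m by simp [Nat.card_eq_fintype_card],
      cnt_eq_rDerangement (show r' + 1 ≤ m by omega), show m - (r' + 1) = n' + 2 by omega]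
  rw [hsum, hthird, Fintype.card_fin]

end Main
end RDAux

theorem rDerangement_recurrence (n r : ℕ) (hn : 2 < n) (hr : 0 < r) :
    rDerangement r n =
      r * rDerangement (r - 1) (n - 1) + (n - 1) * rDerangement r (n - 2) +
        (n + r - 1) * rDerangement r (n - 1) := by
  obtain ⟨n', rfl⟩ : ∃ n', n = n' + 3 := ⟨n - 3, by omega⟩
  obtain ⟨r', rfl⟩ : ∃ r', r = r' + 1 := ⟨r - 1, by omega⟩
  rw [show n' + 3 - 1 = n' + 2 by omega, show n' + 3 - 2 = n' + 1 by omega,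
    show r' + 1 - 1 = r' by omega, show n' + 3 + (r' + 1) - 1 = n' + r' + 3 by omega]
  exact RDAux.main_aux n' r'
end

section
/- For every r ∈ ℕ, the exponential generating function of the r-derangement numbers satisfies Σ_{n=0}^∞ (D_r(n)/n!)·x^n = x^r·e^{-x}/(1-x)^{r+1} (as an identity of real power series, valid for |x| < 1). -/
/-!
Removing the distinguished point `none` from its cycle (`Equiv.removeNone`) sends a
permutation `σ` of `Option α` counted by `D_{r+1}` to the point `a = σ none`, which cannot be
distinguished, and a permutation of `α` in which `a` takes over the role of `none` and may have
become a fixed point. Sorting by whether it has gives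
`D_{r+1}(n+1) = (n+1) (D_{r+1}(n) + D_r(n))`, i.e. `(1 - x) F_{r+1} = x F_r` for the exponential
generating functions, while `D(n+1) = (n+1) D(n) + (-1)^(n+1)` gives `(1 - x) F_0 = e^{-x}`.
The bound `D_r(n) ≤ (n+r)!` makes all these series converge for `|x| < 1`.
-/

open Equiv Function

theorem Set.exists_equiv_image_eq {α β : Type*} [Finite α] [Finite β]
    (h : Nat.card α = Nat.card β) {s : Set α} {t : Set β} (hst : s.ncard = t.ncard) :
    ∃ e : α ≃ β, e '' s = t := by
  classical
  obtain ⟨eS⟩ : Nonempty (s ≃ t) :=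
    Finite.card_eq.mp (by rwa [Nat.card_coe_set_eq, Nat.card_coe_set_eq])
  obtain ⟨eC⟩ : Nonempty (↥sᶜ ≃ ↥tᶜ) := Finite.card_eq.mp (by
    have hs := s.ncard_add_ncard_compl
    have ht := t.ncard_add_ncard_compl
    rw [Nat.card_coe_set_eq, Nat.card_coe_set_eq]
    omega)
  refine ⟨(Equiv.Set.sumCompl s).symm.trans ((eS.sumCongr eC).trans (Equiv.Set.sumCompl t)), ?_⟩
  ext y
  constructor
  · rintro ⟨x, hx, rfl⟩
    simp [Equiv.Set.sumCompl_symm_apply_of_mem hx]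
  · intro hy
    refine ⟨eS.symm ⟨y, hy⟩, (eS.symm ⟨y, hy⟩).2, ?_⟩
    simp [Equiv.Set.sumCompl_symm_apply_of_mem (eS.symm ⟨y, hy⟩).2]

theorem Set.subset_range_val_compl_singleton {α : Type*} {a : α} {R : Set α} (haR : a ∉ R) :
    R ⊆ Set.range ((↑) : ↥({a}ᶜ : Set α) → α) := by
  rw [Subtype.range_coe]
  exact Set.subset_compl_singleton_iff.mpr haR

theorem Fin.ncard_setOf_val_lt (m r : ℕ) : {i : Fin m | (i : ℕ) < r}.ncard = min m r := by
  rw [Set.ncard_eq_toFinset_card']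
  simp [Fin.card_filter_val_lt]

namespace Equiv.Perm

variable {α β : Type*}

def InDistinctCycles (σ : Perm α) (R : Set α) : Prop :=
  R.Pairwise fun i j => ¬ σ.SameCycle i j

theorem SameCycle.map_of_forall_sameCycle_apply {f : α → β} {σ : Perm α} {τ : Perm β}
    (h : ∀ x, τ.SameCycle (f x) (f (σ x))) {x y : α} (hxy : σ.SameCycle x y) :
    τ.SameCycle (f x) (f y) := by
  obtain ⟨k, rfl⟩ := hxy
  induction k using Int.induction_on with
  | zero => exact .rfl
  | succ k ih => exact ih.trans (by rw [add_comm, zpow_add, zpow_one, mul_apply]; exact h _)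
  | pred k ih =>
    have hstep : σ ((σ ^ (-(k : ℤ) - 1)) x) = (σ ^ (-(k : ℤ))) x := by
      rw [← mul_apply, ← zpow_one_add, add_sub_cancel]
    exact ih.trans (hstep ▸ h _).symm

theorem sameCycle_permCongr_iff (e : α ≃ β) (σ : Perm α) {x y : α} :
    (e.permCongr σ).SameCycle (e x) (e y) ↔ σ.SameCycle x y :=
  exists_congr fun k => by
    rw [← permCongrHom_coe, ← map_zpow, permCongrHom_coe, permCongr_apply, symm_apply_apply,
      e.apply_eq_iff_eq]

theorem inDistinctCycles_image_iff {f : α → β} (hf : Injective f) {σ : Perm α} {τ : Perm β}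
    (h : ∀ x y, τ.SameCycle (f x) (f y) ↔ σ.SameCycle x y) {R : Set α} :
    τ.InDistinctCycles (f '' R) ↔ σ.InDistinctCycles R := by
  unfold InDistinctCycles
  rw [hf.injOn.pairwise_image]
  simp only [Set.Pairwise, onFun, h]

theorem inDistinctCycles_insert {σ : Perm α} {a : α} {R : Set α} :
    σ.InDistinctCycles (insert a R) ↔
      σ.InDistinctCycles R ∧ ∀ b ∈ R, a ≠ b → ¬ σ.SameCycle a b :=
  have : Std.Symm fun i j => ¬ σ.SameCycle i j := ⟨fun _ _ h h' => h h'.symm⟩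
  Set.pairwise_insert_of_symm

theorem inDistinctCycles_insert_of_isFixedPt {σ : Perm α} {a : α} {R : Set α}
    (ha : IsFixedPt σ a) : σ.InDistinctCycles (insert a R) ↔ σ.InDistinctCycles R := by
  rw [inDistinctCycles_insert, and_iff_left_iff_imp]
  exact fun _ b _ hab hsc => hab (hsc.eq_of_left ha)

theorem sameCycle_ofSubtype_iff {p : α → Prop} [DecidablePred p] (ρ : Perm (Subtype p))
    {x y : Subtype p} : (ofSubtype ρ).SameCycle x y ↔ ρ.SameCycle x y :=
  exists_congr fun k => by rw [← map_zpow, ofSubtype_apply_coe, Subtype.coe_inj]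

theorem sameCycle_some_removeNone (σ : Perm (Option α)) (x : α) :
    σ.SameCycle (some x) (some (removeNone σ x)) := by
  rcases h : σ (some x) with _ | y
  · refine ⟨2, ?_⟩
    rw [zpow_ofNat, sq, mul_apply, h, removeNone_none σ h]
  · exact ⟨1, by rw [zpow_one, removeNone_some σ ⟨y, h⟩]⟩

theorem sameCycle_removeNone_iff (σ : Perm (Option α)) {i j : α} :
    Perm.SameCycle (removeNone σ) i j ↔ σ.SameCycle (some i) (some j) := by
  refine ⟨SameCycle.map_of_forall_sameCycle_apply (sameCycle_some_removeNone σ), fun h => ?_⟩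
  -- collapse `none` onto its image: a step of `σ` becomes a step of `removeNone σ` or no step
  set ψ : Option α → α := fun u => u.getD ((σ none).getD i)
  refine SameCycle.map_of_forall_sameCycle_apply (f := ψ) (fun u => ?_) h
  rcases u with _ | x
  · refine Eq.sameCycle ?_ _
    rcases h0 : σ none <;> simp [ψ, h0]
  · refine ⟨1, ?_⟩
    rcases hx : σ (some x) with _ | y
    · simp [ψ, ← removeNone_none σ hx]
    · simpa [ψ, hx] using (removeNone_some σ ⟨y, hx⟩).trans hx

theorem mem_derangements_iff_fixedPoints_removeNone_subset {σ : Perm (Option α)} {a : α}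
    (ha : σ none = some a) :
    σ ∈ derangements (Option α) ↔ fixedPoints (removeNone σ) ⊆ {a} := by
  classical
  have key := (Set.ext_iff.mp (derangements.Equiv.RemoveNone.fiber_some a) (removeNone σ)).symm
    |>.trans (derangements.Equiv.RemoveNone.mem_fiber _ _)
  refine ⟨fun h => key.mpr ⟨σ, h, ha, rfl⟩, fun h => ?_⟩
  obtain ⟨F, hF, hFa, hFσ⟩ := key.mp h
  rwa [← decomposeOption.injective (Prod.ext (hFa.trans ha.symm) hFσ)]

theorem inDistinctCycles_option_iff {σ : Perm (Option α)} {a : α} (ha : σ none = some a)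
    {R : Set α} :
    σ.InDistinctCycles (insert none (some '' R)) ↔
      a ∉ R ∧ InDistinctCycles (removeNone σ) (insert a R) := by
  have hnone (b : α) : σ.SameCycle none (some b) ↔ Perm.SameCycle (removeNone σ) a b := by
    rw [sameCycle_removeNone_iff, ← ha, sameCycle_apply_left]
  rw [inDistinctCycles_insert, inDistinctCycles_insert, inDistinctCycles_image_iff
    (Option.some_injective α) fun _ _ => (sameCycle_removeNone_iff σ).symm]
  simp only [Set.forall_mem_image, hnone, ne_eq, reduceCtorEq, not_false_eq_true, forall_const]
  constructor
  · rintro ⟨hR, hb⟩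
    exact ⟨fun haR => hb haR .rfl, hR, fun b hb' _ => hb hb'⟩
  · rintro ⟨haR, hR, hb⟩
    exact ⟨hR, fun b hb' => hb b hb' (ne_of_mem_of_not_mem hb' haR).symm⟩

end Equiv.Perm

open Equiv.Perm

section RDerangements

variable {α β : Type*}

def rDerangements (R : Set α) : Set (Perm α) :=
  {σ ∈ derangements α | σ.InDistinctCycles R}

theorem permCongr_mem_rDerangements_iff (e : α ≃ β) {σ : Perm α} {R : Set α} :
    e.permCongr σ ∈ rDerangements (e '' R) ↔ σ ∈ rDerangements R := by
  refine and_congr ?_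
    (inDistinctCycles_image_iff e.injective fun _ _ => sameCycle_permCongr_iff e σ)
  simp [derangements, ← e.forall_congr_right]

theorem card_rDerangements_image (e : α ≃ β) (R : Set α) :
    Nat.card (rDerangements (e '' R)) = Nat.card (rDerangements R) :=
  (Nat.card_congr (e.permCongr.subtypeEquiv fun _ =>
    (permCongr_mem_rDerangements_iff e).symm)).symm

theorem rDerangement_eq_card_rDerangements [Finite α] {R : Set α} {r n : ℕ}
    (hα : Nat.card α = n + r) (hR : R.ncard = r) :
    rDerangement r n = Nat.card (rDerangements R) := by
  have hfin : {i : Fin (n + r) | (i : ℕ) < r}.ncard = r := by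
    rw [Fin.ncard_setOf_val_lt]
    omega
  obtain ⟨e, he⟩ := Set.exists_equiv_image_eq (by rw [Nat.card_fin, hα]) (hfin.trans hR.symm)
  rw [← he, card_rDerangements_image]
  exact Nat.card_congr (Equiv.subtypeEquivRight fun σ =>
    and_congr Iff.rfl ⟨fun h i hi j hj => h i j hi hj, fun h i j hi hj => h hi hj⟩)

theorem rDerangements_empty : rDerangements (∅ : Set α) = derangements α := by
  ext σ
  simp [rDerangements, InDistinctCycles]

theorem rDerangements_univ_eq_empty [Nonempty α] : rDerangements (Set.univ : Set α) = ∅ := by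
  refine Set.eq_empty_of_forall_notMem fun σ ⟨hσ, hR⟩ => ?_
  obtain ⟨x⟩ := ‹Nonempty α›
  exact hR (Set.mem_univ x) (Set.mem_univ (σ x)) (hσ x).symm ⟨1, rfl⟩

def rDerangementsAllowing (a : α) (R : Set α) : Set (Perm α) :=
  {τ | fixedPoints τ ⊆ {a} ∧ τ.InDistinctCycles (insert a R)}

theorem mem_rDerangements_option_iff {σ : Perm (Option α)} {a : α} (ha : σ none = some a)
    {R : Set α} :
    σ ∈ rDerangements (insert none (some '' R)) ↔
      a ∉ R ∧ removeNone σ ∈ rDerangementsAllowing a R := by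
  simp only [rDerangements, rDerangementsAllowing, Set.mem_ofPred_eq,
    mem_derangements_iff_fixedPoints_removeNone_subset ha, inDistinctCycles_option_iff ha]
  tauto

theorem card_rDerangements_option (R : Set α) :
    Nat.card (rDerangements (insert none (some '' R))) =
      Nat.card (Σ a : ↥Rᶜ, ↥(rDerangementsAllowing (a : α) R)) := by
  classical
  let Φ : (Σ a : ↥Rᶜ, ↥(rDerangementsAllowing (a : α) R)) → Perm (Option α) :=
    fun p => decomposeOption.symm (some p.1, p.2)
  have hΦ : Injective Φ := by
    rintro ⟨a, τ⟩ ⟨b, ρ⟩ h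
    obtain ⟨hab, hτρ⟩ := Prod.mk.inj (decomposeOption.symm.injective h)
    obtain rfl : a = b := Subtype.ext (Option.some_injective α hab)
    obtain rfl : τ = ρ := Subtype.ext hτρ
    rfl
  have hrange : Set.range Φ = rDerangements (insert none (some '' R)) := by
    ext σ
    constructor
    · rintro ⟨⟨a, τ⟩, rfl⟩
      have hσ : decomposeOption (Φ ⟨a, τ⟩) = (some (a : α), (τ : Perm α)) :=
        decomposeOption.apply_symm_apply _
      simp only [decomposeOption_apply, Prod.mk.injEq] at hσ
      exact (mem_rDerangements_option_iff hσ.1).mpr ⟨a.2, hσ.2 ▸ τ.2⟩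
    · intro hσ
      obtain ⟨a, ha⟩ := Option.ne_none_iff_exists'.mp (hσ.1 none)
      obtain ⟨haR, hτ⟩ := (mem_rDerangements_option_iff ha).mp hσ
      exact ⟨⟨⟨a, haR⟩, ⟨removeNone σ, hτ⟩⟩,
        decomposeOption.symm_apply_eq.mpr (by simp [ha])⟩
  rw [← hrange, Nat.card_range_of_injective hΦ]

theorem ofSubtype_mem_rDerangementsAllowing_iff [DecidableEq α] {a : α} {R : Set α}
    (haR : a ∉ R) (ρ : Perm ↥({a}ᶜ : Set α)) :
    ofSubtype ρ ∈ rDerangementsAllowing a R ↔ ρ ∈ rDerangements (Subtype.val ⁻¹' R) := by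
  have hfix : IsFixedPt (ofSubtype ρ) a := ofSubtype_apply_of_not_mem ρ (by simp)
  refine and_congr
    ⟨fun h x hx => x.2 (h (show ofSubtype ρ x = x by rw [ofSubtype_apply_coe, hx])),
      fun h y hy => by_contra fun hya => h ⟨y, hya⟩ (Subtype.ext ?_)⟩ ?_
  · rwa [← ofSubtype_apply_of_mem ρ hya]
  · rw [inDistinctCycles_insert_of_isFixedPt hfix]
    simpa only [Set.image_preimage_eq_of_subset (Set.subset_range_val_compl_singleton haR)] using
      inDistinctCycles_image_iff Subtype.val_injective (fun _ _ => sameCycle_ofSubtype_iff ρ)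
        (R := Subtype.val ⁻¹' R)

theorem card_rDerangementsAllowing [Finite α] {a : α} {R : Set α} (haR : a ∉ R) :
    Nat.card (rDerangementsAllowing a R) =
      Nat.card (rDerangements (insert a R)) +
        Nat.card (rDerangements (Subtype.val ⁻¹' R : Set ↥({a}ᶜ : Set α))) := by
  classical
  set D' := rDerangements (Subtype.val ⁻¹' R : Set ↥({a}ᶜ : Set α))
  have hsplit : rDerangementsAllowing a R = rDerangements (insert a R) ∪ ofSubtype '' D' := by
    ext τ
    constructor
    · intro hτ
      by_cases hτa : τ a = a
      · right
        have hp : ∀ x, τ x ∈ ({a}ᶜ : Set α) ↔ x ∈ ({a}ᶜ : Set α) := fun x =>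
          (τ.injective.eq_iff' hτa).not
        have hτ' : ofSubtype (τ.subtypePerm hp) = τ := ofSubtype_subtypePerm hp
          fun x hx hxa => hx (by rw [Set.mem_singleton_iff.mp hxa]; exact hτa)
        exact ⟨τ.subtypePerm hp,
          (ofSubtype_mem_rDerangementsAllowing_iff haR _).mp (hτ'.symm ▸ hτ), hτ'⟩
      · exact Or.inl ⟨fun x hx => hτa (hτ.1 hx ▸ hx), hτ.2⟩
    · rintro (hτ | ⟨ρ, hρ, rfl⟩)
      · exact ⟨fun x hx => (hτ.1 x hx).elim, hτ.2⟩
      · exact (ofSubtype_mem_rDerangementsAllowing_iff haR ρ).mpr hρ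
  have hdisj : Disjoint (rDerangements (insert a R)) (ofSubtype '' D') :=
    Set.disjoint_left.mpr fun τ hτ ⟨ρ, _, hρ⟩ =>
      hτ.1 a (hρ ▸ ofSubtype_apply_of_not_mem ρ (by simp))
  rw [hsplit, Nat.card_coe_set_eq, Set.ncard_union_eq hdisj, ← Nat.card_coe_set_eq,
    ← Nat.card_coe_set_eq, Nat.card_image_of_injective ofSubtype_injective]

theorem card_rDerangements_option_eq_mul [Finite α] {R : Set α} {r n : ℕ}
    (hα : Nat.card α = n + 1 + r) (hR : R.ncard = r) :
    Nat.card (rDerangements (insert none (some '' R))) =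
      (n + 1) * (rDerangement (r + 1) n + rDerangement r n) := by
  classical
  have : Fintype α := Fintype.ofFinite α
  have hterm (a : ↥Rᶜ) : Nat.card (rDerangementsAllowing (a : α) R) =
      rDerangement (r + 1) n + rDerangement r n := by
    have haR : (a : α) ∉ R := a.2
    have hcompl : Nat.card ↥({(a : α)}ᶜ : Set α) = n + r := by
      have := ({(a : α)} : Set α).ncard_add_ncard_compl
      rw [Set.ncard_singleton] at this
      rw [Nat.card_coe_set_eq]
      omega
    rw [card_rDerangementsAllowing haR,
      ← rDerangement_eq_card_rDerangements (r := r + 1) (n := n) (by omega)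
        (by rw [Set.ncard_insert_of_notMem haR, hR]),
      ← rDerangement_eq_card_rDerangements hcompl ((Set.ncard_preimage_of_injective_subset_range
        Subtype.val_injective (Set.subset_range_val_compl_singleton haR)).trans hR)]
  have hRc : Nat.card ↥Rᶜ = n + 1 := by
    have := R.ncard_add_ncard_compl
    rw [Nat.card_coe_set_eq]
    omega
  rw [card_rDerangements_option, Nat.card_sigma, Finset.sum_congr rfl fun a _ => hterm a,
    Finset.sum_const, Finset.card_univ, ← Nat.card_eq_fintype_card, hRc, smul_eq_mul]

end RDerangements

theorem rDerangement_zero_left (n : ℕ) : rDerangement 0 n = numDerangements n := by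
  rw [rDerangement_eq_card_rDerangements (α := Fin n) (R := ∅) (by simp) (Set.ncard_empty _),
    rDerangements_empty, Nat.card_eq_fintype_card, card_derangements_fin_eq_numDerangements]

theorem rDerangement_succ_zero (r : ℕ) : rDerangement (r + 1) 0 = 0 := by
  rw [rDerangement_eq_card_rDerangements (α := Fin (r + 1)) (R := Set.univ) (by simp) (by simp),
    rDerangements_univ_eq_empty, Nat.card_coe_set_eq, Set.ncard_empty]

theorem rDerangement_succ_succ (r n : ℕ) :
    rDerangement (r + 1) (n + 1) = (n + 1) * (rDerangement (r + 1) n + rDerangement r n) := by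
  have hR : {i : Fin (n + 1 + r) | (i : ℕ) < r}.ncard = r := by
    rw [Fin.ncard_setOf_val_lt]
    omega
  rw [rDerangement_eq_card_rDerangements (r := r + 1) (n := n + 1)
    (R := insert none (some '' {i : Fin (n + 1 + r) | (i : ℕ) < r}))
    (by rw [Finite.card_option, Nat.card_fin]; ring)
    (by rw [Set.ncard_insert_of_notMem (by simp),
      Set.ncard_image_of_injective _ (Option.some_injective _), hR]),
    card_rDerangements_option_eq_mul (n := n) (by simp) hR]

section GeneratingFunction

open Nat

theorem hasSum_of_succ_eq_mul_add {K : Type*} [Field K] [TopologicalSpace K] [IsTopologicalRing K]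
    [T2Space K] {f g : ℕ → K} {x G : K} (hx : x ≠ 1) (hf : Summable f) (hg : HasSum g G)
    (hfg : ∀ n, f (n + 1) = x * f n + g n) : HasSum f ((f 0 + G) / (1 - x)) := by
  obtain ⟨S, hS⟩ := hf
  have h1 : HasSum (fun n => f (n + 1)) (S - f 0) := by
    simpa using (hasSum_nat_add_iff' 1).mpr hS
  have h2 : HasSum (fun n => f (n + 1)) (x * S + G) := by
    simpa only [hfg] using (hS.mul_left x).add hg
  have hSval : S = (f 0 + G) / (1 - x) := by
    rw [eq_div_iff (sub_ne_zero.mpr hx.symm)]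
    linear_combination h1.unique h2
  rwa [← hSval]

theorem rDerangement_le_factorial (r n : ℕ) : rDerangement r n ≤ (n + r)! :=
  (Finite.card_subtype_le _).trans (by rw [Nat.card_perm, Nat.card_fin])

theorem summable_rDerangement_egf (r : ℕ) {x : ℝ} (hx : |x| < 1) :
    Summable fun n : ℕ => (rDerangement r n : ℝ) / n ! * x ^ n := by
  refine (summable_descFactorial_mul_geometric_of_norm_lt_one r (r := |x|)
    (by rwa [Real.norm_eq_abs, abs_abs])).of_norm_bounded fun n => ?_
  rw [norm_mul, norm_div, norm_pow, Real.norm_natCast, Real.norm_natCast, Real.norm_eq_abs]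
  gcongr
  rw [div_le_iff₀ (by positivity)]
  have h := Nat.factorial_mul_descFactorial (Nat.le_add_left r n)
  rw [Nat.add_sub_cancel] at h
  exact_mod_cast (rDerangement_le_factorial r n).trans (by rw [← h, mul_comm])

theorem hasSum_rDerangement_zero_egf {x : ℝ} (hx : |x| < 1) :
    HasSum (fun n : ℕ => (rDerangement 0 n : ℝ) / n ! * x ^ n) (Real.exp (-x) / (1 - x)) := by
  have hexp : HasSum (fun n : ℕ => (-x) ^ (n + 1) / (n + 1)!) (Real.exp (-x) - 1) := by
    have h := NormedSpace.expSeries_div_hasSum_exp (-x)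
    rw [← Real.exp_eq_exp_ℝ] at h
    simpa using (hasSum_nat_add_iff' 1).mpr h
  have h := hasSum_of_succ_eq_mul_add (ne_of_lt (abs_lt.mp hx).2)
    (summable_rDerangement_egf 0 hx) hexp fun n => ?_
  · simpa [rDerangement_zero_left] using h
  · have hD : (numDerangements (n + 1) : ℝ) = (n + 1) * numDerangements n - (-1) ^ n := by
      exact_mod_cast numDerangements_succ n
    rw [rDerangement_zero_left, rDerangement_zero_left, hD, Nat.factorial_succ, neg_pow]
    push_cast
    field_simp
    ring

theorem hasSum_rDerangement_succ_egf {r : ℕ} {x T : ℝ} (hx : |x| < 1)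
    (h : HasSum (fun n : ℕ => (rDerangement r n : ℝ) / n ! * x ^ n) T) :
    HasSum (fun n : ℕ => (rDerangement (r + 1) n : ℝ) / n ! * x ^ n) (x * T / (1 - x)) := by
  have h' := hasSum_of_succ_eq_mul_add (ne_of_lt (abs_lt.mp hx).2)
    (summable_rDerangement_egf (r + 1) hx) (h.mul_left x) fun n => ?_
  · simpa [rDerangement_succ_zero] using h'
  · rw [rDerangement_succ_succ, Nat.factorial_succ]
    push_cast
    field_simp
    ring

end GeneratingFunction

theorem rDerangement_egf (r : ℕ) (x : ℝ) (hx : |x| < 1) :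
    HasSum (fun n : ℕ => (rDerangement r n : ℝ) / n.factorial * x ^ n)
      (x ^ r * Real.exp (-x) / (1 - x) ^ (r + 1)) := by
  have hx1 : 1 - x ≠ 0 := sub_ne_zero.mpr (ne_of_lt (abs_lt.mp hx).2).symm
  induction r with
  | zero => simpa using hasSum_rDerangement_zero_egf hx
  | succ r ih =>
    convert hasSum_rDerangement_succ_egf hx ih using 1
    field_simp
    ring
end

section
/- For every r ∈ ℕ_+ and n ≥ r, the r-derangement number has the closed form D_r(n) = Σ_{j=r}^n C(j, r)·(n!/(n-j)!)·(-1)^{n-j}, where C(j,r) denotes the binomial coefficient. -/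
open Equiv Equiv.Perm Finset

namespace RDer

variable {β : Type*} [Fintype β] [DecidableEq β]

/-- the distinguished elements in `R` lie in pairwise distinct cycles. -/
def Good (R : Finset β) (σ : Perm β) : Prop :=
  ∀ a ∈ R, ∀ b ∈ R, a ≠ b → ¬ σ.SameCycle a b

lemma exists_ret (R : Finset β) (σ : Perm β) (a : ↥R) :
    ∃ k, 0 < k ∧ (σ ^ k) (a : β) ∈ R :=
  ⟨orderOf σ, orderOf_pos σ, by rw [pow_orderOf_eq_one]; simpa using a.2⟩

/-- first return time to `R`. -/
noncomputable def nret (R : Finset β) (σ : Perm β) (a : ↥R) : ℕ :=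
  Nat.find (exists_ret R σ a)

lemma nret_pos (R : Finset β) (σ : Perm β) (a : ↥R) : 0 < nret R σ a :=
  (Nat.find_spec (exists_ret R σ a)).1

lemma nret_mem (R : Finset β) (σ : Perm β) (a : ↥R) : (σ ^ nret R σ a) (a : β) ∈ R :=
  (Nat.find_spec (exists_ret R σ a)).2

lemma nret_min (R : Finset β) (σ : Perm β) (a : ↥R) {k : ℕ} (hk : 0 < k)
    (hlt : k < nret R σ a) : (σ ^ k) (a : β) ∉ R := fun hmem =>
  Nat.find_min (exists_ret R σ a) hlt ⟨hk, hmem⟩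

/-- first return map to `R`. -/
noncomputable def theta0 (R : Finset β) (σ : Perm β) (a : ↥R) : ↥R :=
  ⟨(σ ^ nret R σ a) (a : β), nret_mem R σ a⟩

lemma theta0_inj_aux (R : Finset β) (σ : Perm β) {a b : ↥R}
    (h : theta0 R σ a = theta0 R σ b) (hle : nret R σ a ≤ nret R σ b) : a = b := by
  have h' : (σ ^ nret R σ a) (a : β) = (σ ^ nret R σ b) (b : β) :=
    congrArg Subtype.val h
  rcases eq_or_lt_of_le hle with heq | hlt
  · rw [heq] at h'
    exact Subtype.ext ((σ ^ nret R σ b).injective h')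
  · exfalso
    set d := nret R σ b - nret R σ a with hd
    have hdpos : 0 < d := Nat.sub_pos_of_lt hlt
    have hdlt : d < nret R σ b := by
      have := nret_pos R σ a; omega
    have hda : (σ ^ d) (b : β) = (a : β) := by
      have hsum : nret R σ a + d = nret R σ b := by omega
      have h2 : (σ ^ nret R σ b) (b : β) = (σ ^ nret R σ a) ((σ ^ d) (b : β)) := by
        rw [← hsum, pow_add, Equiv.Perm.mul_apply]
      rw [← h'] at h2
      exact ((σ ^ nret R σ a).injective h2).symm
    exact nret_min R σ b hdpos hdlt (hda ▸ a.2)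

lemma theta0_inj (R : Finset β) (σ : Perm β) : Function.Injective (theta0 R σ) := by
  intro a b h
  rcases le_total (nret R σ a) (nret R σ b) with hle | hle
  · exact theta0_inj_aux R σ h hle
  · exact (theta0_inj_aux R σ h.symm hle).symm

/-- first return map as a permutation of `R`. -/
noncomputable def theta (R : Finset β) (σ : Perm β) : Perm ↥R :=
  Equiv.ofBijective _ (Finite.injective_iff_bijective.mp (theta0_inj R σ))

lemma theta_apply (R : Finset β) (σ : Perm β) (a : ↥R) :
    theta R σ a = theta0 R σ a := rfl

lemma pow_mul_ofSubtype (R : Finset β) (σ : Perm β) (ρ : Perm ↥R) (a : ↥R) :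
    ∀ k, 0 < k → k ≤ nret R σ (ρ a) →
      ((σ * ofSubtype ρ) ^ k) (a : β) = (σ ^ k) ((ρ a : ↥R) : β) := by
  intro k
  induction k with
  | zero => intro h; omega
  | succ k ih =>
    intro _ hk1
    rcases Nat.eq_zero_or_pos k with rfl | hkpos
    · rw [zero_add, pow_one, pow_one, Equiv.Perm.mul_apply,
        ofSubtype_apply_of_mem ρ a.2]
    · have hklt : k < nret R σ (ρ a) := by omega
      have hnot : (σ ^ k) ((ρ a : ↥R) : β) ∉ R := nret_min R σ (ρ a) hkpos hklt
      rw [pow_succ', pow_succ', Equiv.Perm.mul_apply, Equiv.Perm.mul_apply,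
        ih hkpos (by omega), Equiv.Perm.mul_apply,
        ofSubtype_apply_of_not_mem ρ hnot]

lemma theta_mul (R : Finset β) (σ : Perm β) (ρ : Perm ↥R) :
    theta R (σ * ofSubtype ρ) = theta R σ * ρ := by
  ext a
  show ((theta0 R (σ * ofSubtype ρ) a : ↥R) : β) = ((theta0 R σ (ρ a) : ↥R) : β)
  have hn : nret R (σ * ofSubtype ρ) a = nret R σ (ρ a) := by
    apply le_antisymm
    · apply Nat.find_le
      refine ⟨nret_pos R σ (ρ a), ?_⟩
      rw [pow_mul_ofSubtype R σ ρ a (nret R σ (ρ a)) (nret_pos R σ (ρ a)) le_rfl]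
      exact nret_mem R σ (ρ a)
    · by_contra hlt
      push_neg at hlt
      have h1 := nret_pos R (σ * ofSubtype ρ) a
      have h2 := nret_mem R (σ * ofSubtype ρ) a
      rw [pow_mul_ofSubtype R σ ρ a (nret R (σ * ofSubtype ρ) a) h1 (by omega)] at h2
      exact nret_min R σ (ρ a) h1 hlt h2
  show ((σ * ofSubtype ρ) ^ nret R (σ * ofSubtype ρ) a) (a : β) = _
  rw [hn, pow_mul_ofSubtype R σ ρ a (nret R σ (ρ a)) (nret_pos R σ (ρ a)) le_rfl]
  rfl

lemma pow_fix (σ : Perm β) {x : β} (n : ℕ) (h : (σ ^ n) x = x) (q : ℕ) :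
    (σ ^ (n * q)) x = x := by
  induction q with
  | zero => simp
  | succ q ih =>
    rw [Nat.mul_succ, pow_add, Equiv.Perm.mul_apply, h, ih]

lemma good_iff_theta_eq_one (R : Finset β) (σ : Perm β) :
    Good R σ ↔ theta R σ = 1 := by
  constructor
  · intro hg
    ext a
    show ((theta0 R σ a : ↥R) : β) = (a : β)
    by_contra hne
    have hsc : σ.SameCycle (a : β) ((theta0 R σ a : ↥R) : β) :=
      ⟨(nret R σ a : ℤ), by rw [zpow_natCast]; rfl⟩
    exact hg _ a.2 _ (nret_mem R σ a) (fun h => hne h.symm) hsc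
  · intro h1 a ha b hb hne hsc
    set a' : ↥R := ⟨a, ha⟩ with ha'
    have hfix : (σ ^ nret R σ a') a = a := by
      have := congrArg (fun f : Perm ↥R => ((f a' : ↥R) : β)) h1
      simpa [theta_apply, theta0] using this
    obtain ⟨i, hi0, _, hieq⟩ := hsc.exists_pow_eq''
    set n := nret R σ a' with hnn
    have hn0 : 0 < n := nret_pos R σ a'
    have hdecomp : (σ ^ i) a = (σ ^ (i % n)) a := by
      conv_lhs => rw [← Nat.mod_add_div i n]
      rw [pow_add, Equiv.Perm.mul_apply, pow_fix σ n hfix (i / n)]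
    have hmem : (σ ^ (i % n)) a ∈ R := by rw [← hdecomp, hieq]; exact hb
    have hmod0 : i % n ≠ 0 := by
      intro h0
      rw [h0] at hdecomp
      simp only [pow_zero] at hdecomp
      have : (σ ^ i) a = a := by simpa using hdecomp
      exact hne (this.symm.trans hieq)
    exact nret_min R σ a' (Nat.pos_of_ne_zero hmod0) (Nat.mod_lt _ hn0) hmem

noncomputable def goodEquiv (R : Finset β) :
    Perm β ≃ {σ : Perm β // Good R σ} × Perm ↥R where
  toFun σ := (⟨σ * ofSubtype (theta R σ)⁻¹, by
      rw [good_iff_theta_eq_one, theta_mul]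
      simp⟩, theta R σ)
  invFun x := (x.1 : Perm β) * ofSubtype x.2
  left_inv σ := by
    show σ * ofSubtype (theta R σ)⁻¹ * ofSubtype (theta R σ) = σ
    rw [mul_assoc, ← map_mul]
    simp
  right_inv := by
    rintro ⟨⟨g, hg⟩, ρ⟩
    have hθ : theta R (g * ofSubtype ρ) = ρ := by
      rw [theta_mul, (good_iff_theta_eq_one R g).mp hg, one_mul]
    refine Prod.ext (Subtype.ext ?_) hθ
    show g * ofSubtype ρ * ofSubtype (theta R (g * ofSubtype ρ))⁻¹ = g
    rw [hθ, mul_assoc, ← map_mul]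
    simp

lemma card_good_mul (R : Finset β) :
    Nat.card {σ : Perm β // Good R σ} * Nat.factorial R.card = Nat.factorial (Fintype.card β) := by
  have h := Nat.card_congr (goodEquiv R)
  rw [Nat.card_prod] at h
  have h1 : Nat.card (Perm β) = Nat.factorial (Fintype.card β) := by
    rw [Nat.card_eq_fintype_card, Fintype.card_perm]
  have h2 : Nat.card (Perm ↥R) = Nat.factorial R.card := by
    rw [Nat.card_eq_fintype_card, Fintype.card_perm, Fintype.card_coe]
  rw [h1, h2] at h
  exact h.symm

lemma card_good (R : Finset β) :
    Nat.card {σ : Perm β // Good R σ} =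
      (Fintype.card β).choose R.card * Nat.factorial (Fintype.card β - R.card) := by
  have hle : R.card ≤ Fintype.card β := by
    simpa using Finset.card_le_card (Finset.subset_univ R)
  apply Nat.eq_of_mul_eq_mul_right (Nat.factorial_pos R.card)
  rw [card_good_mul R, ← Nat.choose_mul_factorial_mul_factorial hle]
  ring

section Restrict

variable (T R : Finset β)

lemma fix_mem_compl_iff {σ : Perm β} (hT : ∀ x ∈ T, σ x = x) (x : β) :
    x ∉ T ↔ σ x ∉ T := by
  constructor
  · intro hx hσx
    have h2 : σ x = x := σ.injective (hT _ hσx)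
    exact hx (h2 ▸ hσx)
  · intro hσx hx
    exact hσx (by rw [hT x hx]; exact hx)

/-- restriction of a permutation fixing `T` pointwise to the complement of `T` -/
def resPerm (σ : Perm β) (hT : ∀ x ∈ T, σ x = x) : Perm {x : β // x ∉ T} :=
  σ.subtypePerm (fun x => (fix_mem_compl_iff T hT x).symm)

lemma sameCycle_fixed {σ : Perm β} {a b : β} (ha : σ a = a) (h : σ.SameCycle a b) :
    a = b := by
  obtain ⟨k, hk⟩ := h
  rw [zpow_apply_eq_self_of_apply_eq_self ha k] at hk
  exact hk

lemma good_res_iff (σ : Perm β) (hT : ∀ x ∈ T, σ x = x) :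
    Good (R.subtype (· ∉ T)) (resPerm T σ hT) ↔ Good R σ := by
  constructor
  · intro hg a ha b hb hne hsc
    by_cases haT : a ∈ T
    · exact hne (sameCycle_fixed (hT a haT) hsc)
    · by_cases hbT : b ∈ T
      · exact hne (sameCycle_fixed (hT b hbT) hsc.symm).symm
      · refine hg ⟨a, haT⟩ (by simpa [Finset.mem_subtype] using ha) ⟨b, hbT⟩
          (by simpa [Finset.mem_subtype] using hb)
          (fun h => hne (congrArg Subtype.val h)) ?_
        exact (Equiv.Perm.sameCycle_subtypePerm).mpr hsc
  · intro hg a ha b hb hne hsc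
    rw [Finset.mem_subtype] at ha hb
    exact hg _ ha _ hb (fun h => hne (Subtype.ext h))
      ((Equiv.Perm.sameCycle_subtypePerm).mp hsc)

lemma ofSubtype_fixes (σ' : Perm {x : β // x ∉ T}) :
    ∀ x ∈ T, ofSubtype σ' x = x := fun x hx =>
  ofSubtype_apply_of_not_mem σ' (not_not.mpr hx)

lemma ofSubtype_resPerm (σ : Perm β) (hT : ∀ x ∈ T, σ x = x) :
    ofSubtype (resPerm T σ hT) = σ := by
  ext x
  by_cases hx : x ∈ T
  · rw [ofSubtype_apply_of_not_mem (p := fun x => x ∉ T) _ (not_not.mpr hx), hT x hx]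
  · rw [ofSubtype_apply_of_mem (p := fun x => x ∉ T) _ hx]
    rfl

lemma resPerm_ofSubtype (σ' : Perm {x : β // x ∉ T}) :
    resPerm T (ofSubtype σ') (ofSubtype_fixes T σ') = σ' :=
  subtypePerm_ofSubtype σ'

noncomputable def resEquiv :
    {σ : Perm β // Good R σ ∧ ∀ x ∈ T, σ x = x} ≃
      {σ' : Perm {x : β // x ∉ T} // Good (R.subtype (· ∉ T)) σ'} where
  toFun x := ⟨resPerm T x.1 x.2.2, (good_res_iff T R x.1 x.2.2).mpr x.2.1⟩
  invFun y := ⟨ofSubtype y.1, by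
    have h1 := resPerm_ofSubtype T y.1
    have h2 := (good_res_iff T R (ofSubtype y.1) (ofSubtype_fixes T y.1)).mp
    rw [h1] at h2
    exact h2 y.2, ofSubtype_fixes T y.1⟩
  left_inv x := Subtype.ext (ofSubtype_resPerm T x.1 x.2.2)
  right_inv y := Subtype.ext (resPerm_ofSubtype T y.1)

lemma card_compl_subtype :
    Fintype.card {x : β // x ∉ T} = Fintype.card β - T.card := by
  rw [Fintype.card_subtype_compl, Fintype.card_coe]

lemma card_R_subtype (hTR : T ⊆ R) :
    (R.subtype (· ∉ T)).card = R.card - T.card := by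
  rw [Finset.card_subtype, ← Finset.sdiff_eq_filter, Finset.card_sdiff_of_subset hTR]

lemma card_good_fix (hTR : T ⊆ R) :
    Nat.card {σ : Perm β // Good R σ ∧ ∀ x ∈ T, σ x = x} =
      (Fintype.card β - T.card).choose (R.card - T.card) *
        Nat.factorial (Fintype.card β - R.card) := by
  have hcb : Fintype.card β - T.card - (R.card - T.card) = Fintype.card β - R.card := by
    have h1 : T.card ≤ R.card := Finset.card_le_card hTR
    have h2 : R.card ≤ Fintype.card β := by
      simpa using Finset.card_le_card (Finset.subset_univ R)
    omega
  rw [Nat.card_congr (resEquiv T R), card_good, card_compl_subtype,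
    card_R_subtype T R hTR, hcb]

lemma nonfix_res_iff (hd : Disjoint T R) (σ : Perm β) (hT : ∀ x ∈ T, σ x = x) :
    (∀ a ∈ R, σ a ≠ a) ↔
      (∀ a' ∈ R.subtype (· ∉ T), resPerm T σ hT a' ≠ a') := by
  constructor
  · intro h a' ha' heq
    rw [Finset.mem_subtype] at ha'
    exact h _ ha' (congrArg Subtype.val heq)
  · intro h a ha heq
    have haT : a ∉ T := fun haT => (Finset.disjoint_left.mp hd) haT ha
    exact h ⟨a, haT⟩ (by simpa [Finset.mem_subtype] using ha) (Subtype.ext heq)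

noncomputable def resEquiv' (hd : Disjoint T R) :
    {σ : Perm β // (Good R σ ∧ ∀ a ∈ R, σ a ≠ a) ∧ ∀ x ∈ T, σ x = x} ≃
      {σ' : Perm {x : β // x ∉ T} //
        Good (R.subtype (· ∉ T)) σ' ∧ ∀ a' ∈ R.subtype (· ∉ T), σ' a' ≠ a'} where
  toFun x := ⟨resPerm T x.1 x.2.2,
    (good_res_iff T R x.1 x.2.2).mpr x.2.1.1,
    (nonfix_res_iff T R hd x.1 x.2.2).mp x.2.1.2⟩
  invFun y := ⟨ofSubtype y.1, ⟨by
      have h1 := resPerm_ofSubtype T y.1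
      have h2 := (good_res_iff T R (ofSubtype y.1) (ofSubtype_fixes T y.1)).mp
      rw [h1] at h2
      exact h2 y.2.1, by
      have h1 := resPerm_ofSubtype T y.1
      have h2 := (nonfix_res_iff T R hd (ofSubtype y.1) (ofSubtype_fixes T y.1)).mpr
      rw [h1] at h2
      exact h2 y.2.2⟩, ofSubtype_fixes T y.1⟩
  left_inv x := Subtype.ext (ofSubtype_resPerm T x.1 x.2.2)
  right_inv y := Subtype.ext (resPerm_ofSubtype T y.1)

end Restrict

/-- inclusion–exclusion -/
lemma inclusion_exclusion {X : Type*} [Fintype X] (P : Finset β)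
    (F : X → β → Prop) [∀ x i, Decidable (F x i)] :
    ((Finset.univ.filter fun x : X => ∀ i ∈ P, ¬ F x i).card : ℤ) =
      ∑ T ∈ P.powerset, (-1) ^ T.card *
        ((Finset.univ.filter fun x : X => ∀ i ∈ T, F x i).card : ℤ) := by
  have hstep : ∀ T ∈ P.powerset,
      (-1 : ℤ) ^ T.card * ((Finset.univ.filter fun x : X => ∀ i ∈ T, F x i).card : ℤ)
        = ∑ x : X, (if T ⊆ P.filter (F x) then (-1 : ℤ) ^ T.card else 0) := by
    intro T hT
    rw [Finset.mem_powerset] at hT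
    rw [Finset.card_filter, Nat.cast_sum, Finset.mul_sum]
    refine Finset.sum_congr rfl fun x _ => ?_
    have : (∀ i ∈ T, F x i) ↔ T ⊆ P.filter (F x) := by
      constructor
      · intro h i hi
        exact Finset.mem_filter.mpr ⟨hT hi, h i hi⟩
      · intro h i hi
        exact (Finset.mem_filter.mp (h hi)).2
    by_cases hc : ∀ i ∈ T, F x i
    · rw [if_pos hc, if_pos (this.mp hc)]
      simp
    · rw [if_neg hc, if_neg (fun hs => hc (this.mpr hs))]
      simp
  rw [Finset.sum_congr rfl hstep, Finset.sum_comm]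
  have hinner : ∀ x : X, ∑ T ∈ P.powerset,
      (if T ⊆ P.filter (F x) then (-1 : ℤ) ^ T.card else 0)
        = if (∀ i ∈ P, ¬ F x i) then 1 else 0 := by
    intro x
    have h1 : ∑ T ∈ P.powerset, (if T ⊆ P.filter (F x) then (-1 : ℤ) ^ T.card else 0)
        = ∑ T ∈ (P.filter (F x)).powerset, (-1 : ℤ) ^ T.card := by
      rw [← Finset.sum_filter]
      congr 1
      ext S
      simp only [Finset.mem_filter, Finset.mem_powerset]
      constructor
      · exact fun h => h.2
      · exact fun h => ⟨h.trans (Finset.filter_subset _ _), h⟩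
    rw [h1, Finset.sum_powerset_neg_one_pow_card]
    congr 1
    rw [Finset.filter_eq_empty_iff]
  rw [Finset.sum_congr rfl (fun x _ => hinner x), Finset.sum_boole]

lemma inclusion_exclusion_natCard {X : Type*} [Fintype X] (P : Finset β)
    (F : X → β → Prop) [∀ x i, Decidable (F x i)] :
    ((Nat.card {x : X // ∀ i ∈ P, ¬ F x i}) : ℤ) =
      ∑ T ∈ P.powerset, (-1) ^ T.card * (Nat.card {x : X // ∀ i ∈ T, F x i} : ℤ) := by
  have h := inclusion_exclusion P F
  rw [show (Finset.univ.filter fun x : X => ∀ i ∈ P, ¬ F x i).card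
      = Nat.card {x : X // ∀ i ∈ P, ¬ F x i} by
    rw [Nat.card_eq_fintype_card, Fintype.card_subtype]] at h
  rw [h]
  refine Finset.sum_congr rfl fun T _ => ?_
  rw [show (Finset.univ.filter fun x : X => ∀ i ∈ T, F x i).card
      = Nat.card {x : X // ∀ i ∈ T, F x i} by
    rw [Nat.card_eq_fintype_card, Fintype.card_subtype]]

lemma alt_sum_choose (m : ℕ) : ∀ (r M : ℕ),
    (∑ s ∈ Finset.range (r + 1),
        (-1 : ℤ) ^ s * (r.choose s : ℤ) * (((M + (r - s)).choose m : ℕ) : ℤ))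
      = if r ≤ m then ((M.choose (m - r) : ℕ) : ℤ) else 0 := by
  intro r
  induction r with
  | zero => intro M; simp
  | succ r ih =>
    intro M
    set f : ℕ → ℤ := fun s =>
      (-1 : ℤ) ^ s * ((r+1).choose s : ℤ) * (((M + (r + 1 - s)).choose m : ℕ) : ℤ) with hf
    set g0 : ℕ → ℤ := fun s =>
      (-1 : ℤ) ^ s * (r.choose s : ℤ) * (((M + (r - s)).choose m : ℕ) : ℤ) with hg0
    set g1 : ℕ → ℤ := fun s =>
      (-1 : ℤ) ^ s * (r.choose s : ℤ) * (((M + 1 + (r - s)).choose m : ℕ) : ℤ) with hg1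
    set h : ℕ → ℤ := fun s =>
      (-1 : ℤ) ^ s * (r.choose (s+1) : ℤ) * (((M + (r - s)).choose m : ℕ) : ℤ) with hh
    set v : ℕ → ℤ := fun s =>
      (-1 : ℤ) ^ s * (r.choose s : ℤ) * (((M + (r + 1 - s)).choose m : ℕ) : ℤ) with hv
    have hB : ∑ s ∈ Finset.range (r+1), g1 s
        = -(∑ s ∈ Finset.range (r+1), h s) + f 0 := by
      have b1 : ∑ s ∈ Finset.range (r+1), g1 s = ∑ s ∈ Finset.range (r+1), v s :=
        Finset.sum_congr rfl fun s hs => by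
          rw [Finset.mem_range] at hs
          have hms : M + 1 + (r - s) = M + (r + 1 - s) := by omega
          simp only [hg1, hv, hms]
      have b2 : ∑ s ∈ Finset.range (r+2), v s
          = ∑ s ∈ Finset.range (r+1), v s + v (r+1) := Finset.sum_range_succ v (r+1)
      have b3 : v (r+1) = 0 := by simp [hv]
      have b4 : ∑ s ∈ Finset.range (r+2), v s
          = ∑ s ∈ Finset.range (r+1), v (s+1) + v 0 := Finset.sum_range_succ' v (r+1)
      have b5 : ∑ s ∈ Finset.range (r+1), v (s+1)
          = ∑ s ∈ Finset.range (r+1), (- h s) :=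
        Finset.sum_congr rfl fun s hs => by
          rw [Finset.mem_range] at hs
          have hsub : r + 1 - (s + 1) = r - s := by omega
          simp only [hv, hh, hsub, pow_succ]
          ring
      have b6 : v 0 = f 0 := by simp [hv, hf]
      rw [b5, Finset.sum_neg_distrib, b6] at b4
      rw [b1]
      linarith [b2, b3, b4]
    have e2 : ∑ s ∈ Finset.range (r+1), f (s+1)
        = ∑ s ∈ Finset.range (r+1), (- g0 s - h s) :=
      Finset.sum_congr rfl fun s hs => by
        rw [Finset.mem_range] at hs
        have hsub : r + 1 - (s + 1) = r - s := by omega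
        simp only [hf, hg0, hh, hsub, Nat.choose_succ_succ, pow_succ]
        push_cast
        ring
    have key : (∑ s ∈ Finset.range (r + 2), f s)
        = (∑ s ∈ Finset.range (r + 1), g1 s) - (∑ s ∈ Finset.range (r + 1), g0 s) := by
      have k1 : ∑ s ∈ Finset.range (r + 2), f s
          = ∑ s ∈ Finset.range (r + 1), f (s+1) + f 0 := Finset.sum_range_succ' f (r+1)
      rw [e2, Finset.sum_sub_distrib, Finset.sum_neg_distrib] at k1
      linarith [k1, hB]
    show ∑ s ∈ Finset.range (r + 2), f s = _
    rw [key, ih (M+1), ih M]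
    by_cases hrm : r ≤ m
    · rcases eq_or_lt_of_le hrm with rfl | hlt
      · simp
      · have hr1 : r + 1 ≤ m := hlt
        have hk : m - r = (m - (r+1)) + 1 := by omega
        rw [if_pos hrm, if_pos hrm, if_pos hr1, hk, Nat.choose_succ_succ M (m - (r+1))]
        push_cast
        ring
    · have hr1 : ¬ (r + 1 ≤ m) := by omega
      rw [if_neg hrm, if_neg hrm, if_neg hr1]
      ring

lemma NB_eq (R : Finset β) :
    (Nat.card {σ : Perm β // Good R σ ∧ ∀ a ∈ R, σ a ≠ a} : ℤ) =
      ((Fintype.card β - R.card).choose R.card : ℤ) *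
        ((Fintype.card β - R.card).factorial : ℤ) := by
  classical
  letI : Fintype {σ : Perm β // Good R σ} := Fintype.ofFinite _
  set N := Fintype.card β with hN
  set r := R.card with hr
  set m := N - r with hm
  have hrN : r ≤ N := by
    simpa [hN, hr] using Finset.card_le_card (Finset.subset_univ R)
  have hIE := inclusion_exclusion_natCard (X := {σ : Perm β // Good R σ}) R
    (fun x i => x.1 i = i)
  have hL : Nat.card {x : {σ : Perm β // Good R σ} // ∀ i ∈ R, ¬ x.1 i = i}
      = Nat.card {σ : Perm β // Good R σ ∧ ∀ a ∈ R, σ a ≠ a} :=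
    Nat.card_congr (Equiv.subtypeSubtypeEquivSubtypeInter (Good R)
      (fun σ => ∀ a ∈ R, σ a ≠ a))
  rw [hL] at hIE
  have hterm : ∀ T ∈ R.powerset,
      (-1 : ℤ) ^ T.card *
          ((Nat.card {x : {σ : Perm β // Good R σ} // ∀ i ∈ T, x.1 i = i}) : ℤ)
        = (-1 : ℤ) ^ T.card *
            (((N - T.card).choose (r - T.card) : ℤ) * (m.factorial : ℤ)) := by
    intro T hT
    rw [Finset.mem_powerset] at hT
    have := Nat.card_congr (Equiv.subtypeSubtypeEquivSubtypeInter (Good R)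
      (fun σ => ∀ x ∈ T, σ x = x))
    rw [this, card_good_fix T R hT]
    push_cast
    ring
  rw [Finset.sum_congr rfl hterm] at hIE
  rw [Finset.sum_powerset_apply_card
    (fun t => (-1 : ℤ) ^ t * (((N - t).choose (r - t) : ℤ) * (m.factorial : ℤ)))] at hIE
  have hsum : ∑ s ∈ Finset.range (r + 1),
      r.choose s • ((-1 : ℤ) ^ s * (((N - s).choose (r - s) : ℤ) * (m.factorial : ℤ)))
      = (m.factorial : ℤ) * ∑ s ∈ Finset.range (r + 1),
          (-1 : ℤ) ^ s * (r.choose s : ℤ) * (((m + (r - s)).choose m : ℕ) : ℤ) := by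
    rw [Finset.mul_sum]
    refine Finset.sum_congr rfl fun s hs => ?_
    rw [Finset.mem_range] at hs
    have hc : (N - s).choose (r - s) = (m + (r - s)).choose m := by
      have h1 : N - s = m + (r - s) := by omega
      rw [h1, ← Nat.choose_symm (Nat.le_add_left (r - s) m), Nat.add_sub_cancel]
    rw [hc, nsmul_eq_mul]
    ring
  rw [hsum, alt_sum_choose m r m] at hIE
  rw [hIE]
  by_cases hrm : r ≤ m
  · rw [if_pos hrm, Nat.choose_symm hrm]
    ring
  · rw [if_neg hrm, Nat.choose_eq_zero_of_lt (by omega)]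
    push_cast
    ring

end RDer

theorem rDerangement_closed_form (r n : ℕ) (hr : 0 < r) (hn : r ≤ n) :
    (rDerangement r n : ℤ) =
      ∑ j ∈ Finset.Icc r n,
        (j.choose r : ℤ) * (n.factorial / (n - j).factorial : ℕ) * (-1) ^ (n - j) := by
  classical
  open RDer Finset Equiv Equiv.Perm in
  set β := Fin (n + r) with hβ
  set R : Finset β := Finset.univ.filter (fun i : β => (i : ℕ) < r) with hRdef
  have hmemR : ∀ i : β, i ∈ R ↔ (i : ℕ) < r := by
    intro i; simp [hRdef]
  have hRcard : R.card = r := by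
    have e : ↥R ≃ Fin r :=
      { toFun := fun x => ⟨(x.1 : ℕ), (hmemR x.1).mp x.2⟩
        invFun := fun j => ⟨⟨(j : ℕ), lt_of_lt_of_le j.2 (Nat.le_add_left r n)⟩,
          (hmemR _).mpr j.2⟩
        left_inv := fun x => by ext; rfl
        right_inv := fun j => by ext; rfl }
    rw [← Fintype.card_coe, Fintype.card_congr e, Fintype.card_fin]
  have hcardβ : Fintype.card β = n + r := by simp [hβ]
  set P : Finset β := Finset.univ \ R with hPdef
  have hPcard : P.card = n := by
    rw [hPdef, Finset.card_sdiff_of_subset (Finset.subset_univ R), Finset.card_univ, hcardβ, hRcard]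
    omega
  -- identify rDerangement with our Nat.card
  have hD : rDerangement r n
      = Nat.card {σ : Equiv.Perm β // Good R σ ∧ ∀ x, σ x ≠ x} := by
    apply Nat.card_congr
    apply Equiv.subtypeEquivRight
    intro σ
    constructor
    · rintro ⟨h1, h2⟩
      exact ⟨fun a ha b hb hab => h2 a b ((hmemR a).mp ha) ((hmemR b).mp hb) hab, h1⟩
    · rintro ⟨hg, h1⟩
      exact ⟨h1, fun i j hi hj hij => hg i ((hmemR i).mpr hi) j ((hmemR j).mpr hj) hij⟩
  letI : Fintype {σ : Equiv.Perm β // Good R σ ∧ ∀ a ∈ R, σ a ≠ a} := Fintype.ofFinite _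
  have hIE := inclusion_exclusion_natCard
    (X := {σ : Equiv.Perm β // Good R σ ∧ ∀ a ∈ R, σ a ≠ a}) P (fun x i => x.1 i = i)
  -- identify left side of hIE
  have hL : Nat.card {x : {σ : Equiv.Perm β // Good R σ ∧ ∀ a ∈ R, σ a ≠ a} //
        ∀ i ∈ P, ¬ x.1 i = i}
      = Nat.card {σ : Equiv.Perm β // Good R σ ∧ ∀ x, σ x ≠ x} := by
    have hflat := Nat.card_congr (Equiv.subtypeSubtypeEquivSubtypeInter
      (fun σ : Equiv.Perm β => Good R σ ∧ ∀ a ∈ R, σ a ≠ a)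
      (fun σ : Equiv.Perm β => ∀ i ∈ P, ¬ σ i = i))
    rw [hflat]
    apply Nat.card_congr
    apply Equiv.subtypeEquivRight
    intro σ
    constructor
    · rintro ⟨⟨hg, hRf⟩, hPf⟩
      refine ⟨hg, fun x => ?_⟩
      by_cases hx : x ∈ R
      · exact hRf x hx
      · exact hPf x (by rw [hPdef]; exact Finset.mem_sdiff.mpr ⟨Finset.mem_univ x, hx⟩)
    · rintro ⟨hg, hall⟩
      exact ⟨⟨hg, fun a _ => hall a⟩, fun i _ => hall i⟩
  rw [hL] at hIE
  -- compute terms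
  have hterm : ∀ T ∈ P.powerset,
      (-1 : ℤ) ^ T.card * (Nat.card {x : {σ : Equiv.Perm β // Good R σ ∧ ∀ a ∈ R, σ a ≠ a} //
          ∀ i ∈ T, x.1 i = i} : ℤ)
        = (-1 : ℤ) ^ T.card *
            (((n - T.card).choose r : ℤ) * ((n - T.card).factorial : ℤ)) := by
    intro T hT
    rw [Finset.mem_powerset] at hT
    have htn : T.card ≤ n := hPcard ▸ Finset.card_le_card hT
    have hd : Disjoint T R := by
      rw [Finset.disjoint_left]
      intro a haT haR
      have := hT haT
      rw [hPdef, Finset.mem_sdiff] at this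
      exact this.2 haR
    have hflat := Nat.card_congr (Equiv.subtypeSubtypeEquivSubtypeInter
      (fun σ : Equiv.Perm β => Good R σ ∧ ∀ a ∈ R, σ a ≠ a)
      (fun σ : Equiv.Perm β => ∀ i ∈ T, σ i = i))
    rw [hflat, Nat.card_congr (resEquiv' T R hd)]
    rw [NB_eq]
    have hc1 : Fintype.card {x : β // x ∉ T} = n + r - T.card := by
      rw [card_compl_subtype, hcardβ]
    have hc2 : (R.subtype (· ∉ T)).card = r := by
      rw [Finset.card_subtype, Finset.filter_true_of_mem, hRcard]
      intro a haR
      exact fun haT => (Finset.disjoint_left.mp hd) haT haR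
    rw [hc1, hc2]
    have : n + r - T.card - r = n - T.card := by omega
    rw [this]
  rw [Finset.sum_congr rfl hterm] at hIE
  rw [Finset.sum_powerset_apply_card
    (fun t => (-1 : ℤ) ^ t * (((n - t).choose r : ℤ) * ((n - t).factorial : ℤ)))] at hIE
  rw [hPcard] at hIE
  -- now the goal
  set f : ℕ → ℤ := fun j =>
    (j.choose r : ℤ) * ((n.factorial / (n - j).factorial : ℕ) : ℤ) * (-1) ^ (n - j) with hfdef
  have htarget : ∑ j ∈ Finset.Icc r n, f j = ∑ j ∈ Finset.range (n + 1), f j := by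
    apply Finset.sum_subset
    · intro j hj
      rw [Finset.mem_Icc] at hj
      rw [Finset.mem_range]
      omega
    · intro j hj hj2
      rw [Finset.mem_range] at hj
      rw [Finset.mem_Icc] at hj2
      have : j < r := by omega
      simp [hfdef, Nat.choose_eq_zero_of_lt this]
  have hreflect : ∑ j ∈ Finset.range (n + 1), f j
      = ∑ t ∈ Finset.range (n + 1), f (n - t) := by
    have := Finset.sum_range_reflect f (n + 1)
    simp only [Nat.add_sub_cancel] at this
    rw [← this]
  have hmatch : ∀ t ∈ Finset.range (n + 1),
      n.choose t • ((-1 : ℤ) ^ t * (((n - t).choose r : ℤ) * ((n - t).factorial : ℤ)))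
        = f (n - t) := by
    intro t ht
    rw [Finset.mem_range] at ht
    have ht' : t ≤ n := by omega
    have h1 : n - (n - t) = t := by omega
    have h2 : n.factorial / t.factorial = n.choose t * (n - t).factorial := by
      rw [← Nat.choose_mul_factorial_mul_factorial ht',
        mul_comm (n.choose t) (Nat.factorial t), mul_assoc,
        Nat.mul_div_cancel_left _ (Nat.factorial_pos t)]
    rw [hfdef]
    simp only [h1]
    rw [h2]
    push_cast
    ring
  rw [hD]
  push_cast [hIE]
  rw [Finset.sum_congr rfl hmatch, htarget, hreflect]
end

section
/- For n ≥ r ≥ 1, the number of permutations of a set of n+r elements such that none of the first r elements is a fixed point and the first r elements lie in pairwise distinct cycles equals (n!/r!)·n·(n-1)···(n-r+1). -/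
/-!
Let `f n r` count the permutations of `n` ordinary and `r` distinguished points that move every
distinguished point and keep the distinguished points in pairwise distinct cycles. Deleting an
ordinary point `p` from its cycle (`Equiv.Perm.decomposeOption`) does not change which of the other
points share a cycle, so the condition survives unless a distinguished `d` becomes fixed, i.e. the
cycle of `p` was `(p d)`; deleting `d` as well then leaves a configuration counted by `f n (r - 1)`.
As `p` can be inserted after any of the other `n + r` points or as a fixed point,
`f (n + 1) r = (n + r + 1) f n r + r f n (r - 1)`, whose solution is
`f n r = n! * C(n, r) = n! / r! * n (n - 1) ⋯ (n - r + 1)`.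
-/

open Finset Function
open scoped Nat

namespace Nat

theorem succ_factorial_mul_choose (n r : ℕ) :
    (n + 1)! * (n + 1).choose r =
      (n + r + 1) * (n ! * n.choose r) + r * (n ! * n.choose (r - 1)) := by
  rcases r with _ | r
  · simp [factorial_succ]
  · have key := add_one_mul_choose_eq n r
    rw [choose_succ_succ] at key
    rw [factorial_succ, choose_succ_succ, add_tsub_cancel_right]
    linear_combination n ! * key

theorem factorial_div_factorial_mul_descFactorial (n r : ℕ) :
    n ! / r ! * n.descFactorial r = n ! * n.choose r := by
  rw [descFactorial_eq_factorial_mul_choose, ← mul_assoc]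
  rcases le_or_gt r n with h | h
  · rw [Nat.div_mul_cancel (factorial_dvd_factorial h)]
  · simp [choose_eq_zero_of_lt h]

end Nat

namespace Equiv.Perm

variable {α β : Type*}

section SameCycle

variable {f : Perm α} {x y : α}

theorem SameCycle.map_of_forall_sameCycle_apply_s8 [Finite α] {g : Perm β} {j : α → β}
    (hj : ∀ a, g.SameCycle (j a) (j (f a))) (h : f.SameCycle x y) :
    g.SameCycle (j x) (j y) := by
  obtain ⟨k, rfl⟩ := h.exists_nat_pow_eq
  clear h
  induction k with
  | zero => rfl
  | succ k ih => rw [pow_succ', mul_apply]; exact ih.trans (hj _)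

theorem sameCycle_permCongr (e : α ≃ β) :
    (e.permCongr f).SameCycle (e x) (e y) ↔ f.SameCycle x y :=
  exists_congr fun k => by
    change (e.permCongrHom f ^ k) (e x) = e y ↔ _
    rw [← map_zpow]
    simp [permCongrHom]

end SameCycle

def IsSeparating (D : Finset α) (σ : Perm α) : Prop :=
  (∀ x ∈ D, σ x ≠ x) ∧ (D : Set α).Pairwise fun x y => ¬σ.SameCycle x y

theorem IsSeparating.apply_notMem {D : Finset α} {σ : Perm α} (hσ : σ.IsSeparating D) {x : α}
    (hx : x ∈ D) : σ x ∉ D :=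
  fun hσx => hσ.2 hx hσx (hσ.1 x hx).symm (sameCycle_apply_right.2 .rfl)

theorem isSeparating_permCongr_iff (e : α ≃ β) {D : Finset α} {D' : Finset β}
    (hD : ∀ x, e x ∈ D' ↔ x ∈ D) {σ : Perm α} :
    (e.permCongr σ).IsSeparating D' ↔ σ.IsSeparating D := by
  simp only [IsSeparating, Set.Pairwise, e.symm.forall_congr_left, symm_symm, mem_coe, hD,
    permCongr_apply, symm_apply_apply, sameCycle_permCongr, ne_eq, e.apply_eq_iff_eq]

theorem card_isSeparating_congr (e : α ≃ β) {D : Finset α} {D' : Finset β}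
    (hD : ∀ x, e x ∈ D' ↔ x ∈ D) :
    Nat.card {σ : Perm α // σ.IsSeparating D} = Nat.card {σ : Perm β // σ.IsSeparating D'} :=
  Nat.card_congr <| e.permCongr.subtypeEquiv fun _ => (isSeparating_permCongr_iff e hD).symm

theorem isSeparating_subtypePerm_iff {p : α → Prop} [DecidablePred p] {f : Perm α}
    (h : ∀ x, p (f x) ↔ p x) {D : Finset α} :
    (f.subtypePerm h).IsSeparating (D.subtype p) ↔ f.IsSeparating (D.filter p) := by
  simp only [IsSeparating, Set.Pairwise, Subtype.forall, mem_subtype, coe_filter, mem_filter,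
    Set.mem_ofPred_eq, mem_coe, ne_eq, Subtype.ext_iff, subtypePerm_apply, sameCycle_subtypePerm]
  grind

theorem card_isSeparating_fixing [DecidableEq α] (y : α) (D : Finset α) :
    Nat.card {τ : Perm α // τ y = y ∧ τ.IsSeparating (D.erase y)} =
      Nat.card {τ : Perm {x // x ≠ y} // τ.IsSeparating (D.subtype (· ≠ y))} := by
  let e : {τ : Perm α // τ y = y} ≃ Perm {x // x ≠ y} :=
    (Equiv.subtypeEquivRight fun τ => by simp).trans (Perm.subtypeEquivSubtypePerm _).symm
  refine Nat.card_congr <| (subtypeSubtypeEquivSubtypeInter _ _).symm.trans <|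
    e.subtypeEquiv fun τ => ?_
  rw [← filter_ne']
  exact (isSeparating_subtypePerm_iff fun _ => τ.1.injective.ne_iff' τ.2).symm

section DecomposeOption

variable [DecidableEq α] (p : Option α) (τ : Perm α)

theorem decomposeOption_symm_apply_some_eq_self_iff (a : α) :
    decomposeOption.symm (p, τ) (some a) = some a ↔ τ a = a ∧ p ≠ some a := by
  simp only [decomposeOption_symm_apply, coe_mul, comp_apply, optionCongr_apply, Option.map_some,
    swap_apply_def]
  grind

theorem sameCycle_decomposeOption_symm_some [Finite α] {a b : α} :
    (decomposeOption.symm (p, τ)).SameCycle (some a) (some b) ↔ τ.SameCycle a b := by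
  set σ := decomposeOption.symm (p, τ)
  constructor
  · intro h
    -- collapsing `none` onto `p` turns every step of `σ` into at most one step of `τ`
    have hcollapse : ∀ u, τ.SameCycle ((u.or p).getD a) (((σ u).or p).getD a) := by
      rintro (_ | c)
      · cases p <;> simp [σ, SameCycle.refl]
      · by_cases hc : p = some (τ c) <;> simp [σ, swap_apply_def, hc, eq_comm, SameCycle.refl]
    exact h.map_of_forall_sameCycle_apply_s8 hcollapse
  · refine SameCycle.map_of_forall_sameCycle_apply_s8 fun c => ?_
    by_cases hc : p = some (τ c)
    · have : σ (σ (some c)) = some (τ c) := by simp [σ, hc]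
      rw [← this]
      exact sameCycle_apply_right.2 (sameCycle_apply_right.2 .rfl)
    · have : σ (some c) = some (τ c) := by simp [σ, swap_apply_def, Ne.symm hc]
      rw [← this]
      exact sameCycle_apply_right.2 .rfl

theorem isSeparating_decomposeOption_symm_iff [Finite α] {D : Finset α} :
    (decomposeOption.symm (p, τ)).IsSeparating (D.map .some) ↔
      (∀ x ∈ D, p ≠ some x → τ x ≠ x) ∧
        (D : Set α).Pairwise fun x y => ¬τ.SameCycle x y := by
  simp only [IsSeparating, forall_mem_map, coe_map, Embedding.some_apply,
    (Option.some_injective α).injOn.pairwise_image]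
  simp only [Set.Pairwise, onFun_apply, ne_eq, sameCycle_decomposeOption_symm_some,
    decomposeOption_symm_apply_some_eq_self_iff]
  grind

theorem isSeparating_decomposeOption_symm_iff_of_forall_ne [Finite α] {D : Finset α}
    (hp : ∀ x ∈ D, p ≠ some x) :
    (decomposeOption.symm (p, τ)).IsSeparating (D.map .some) ↔ τ.IsSeparating D := by
  rw [isSeparating_decomposeOption_symm_iff]
  exact and_congr_left' (forall₂_congr fun x hx => imp_iff_right (hp x hx))

theorem isSeparating_decomposeOption_symm_some_iff [Finite α] {D : Finset α} {y : α}
    (hy : y ∈ D) :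
    (decomposeOption.symm (some y, τ)).IsSeparating (D.map .some) ↔
      τ.IsSeparating D ∨ τ y = y ∧ τ.IsSeparating (D.erase y) := by
  rw [isSeparating_decomposeOption_symm_iff]
  constructor
  · rintro ⟨hmove, hpair⟩
    by_cases hτy : τ y = y
    · exact .inr ⟨hτy, fun x hx => hmove x (mem_of_mem_erase hx)
        (by simpa using (ne_of_mem_erase hx).symm), hpair.mono (by simp)⟩
    · refine .inl ⟨fun x hx => ?_, hpair⟩
      obtain rfl | hxy := eq_or_ne x y
      exacts [hτy, hmove x hx (by simpa using hxy.symm)]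
  · rintro (⟨hmove, hpair⟩ | ⟨hτy, hmove, hpair⟩)
    · exact ⟨fun x hx _ => hmove x hx, hpair⟩
    · refine ⟨fun x hx hyx => hmove x (mem_erase.2 ⟨by simpa [eq_comm] using hyx, hx⟩), ?_⟩
      rw [← insert_erase hy, coe_insert, Set.pairwise_insert]
      exact ⟨hpair, fun x _ hyx => ⟨fun h => hyx (h.eq_of_left hτy),
        fun h => hyx (h.eq_of_right hτy).symm⟩⟩

end DecomposeOption

theorem card_isSeparating_option [Fintype α] [DecidableEq α] (D : Finset α) :
    Nat.card {σ : Perm (Option α) // σ.IsSeparating (D.map .some)} =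
      (Fintype.card α + 1) * Nat.card {τ : Perm α // τ.IsSeparating D} +
        ∑ y ∈ D, Nat.card {τ : Perm α // τ y = y ∧ τ.IsSeparating (D.erase y)} := by
  classical
  set N := Nat.card {τ : Perm α // τ.IsSeparating D}
  have hfibre : ∀ y, Nat.card {τ : Perm α //
      (decomposeOption.symm (some y, τ)).IsSeparating (D.map .some)} =
      N + if y ∈ D then Nat.card {τ : Perm α // τ y = y ∧ τ.IsSeparating (D.erase y)}
        else 0 := by
    intro y
    split_ifs with hy
    · rw [← Nat.card_sum]
      refine Nat.card_congr <| (subtypeEquivRight fun τ =>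
        isSeparating_decomposeOption_symm_some_iff τ hy).trans (subtypeOrEquiv _ _ ?_)
      simp only [Pi.disjoint_iff, Prop.disjoint_iff]
      exact fun τ ⟨hsep, hτy, _⟩ => hsep.1 y hy hτy
    · rw [add_zero]
      exact Nat.card_congr <| subtypeEquivRight fun τ =>
        isSeparating_decomposeOption_symm_iff_of_forall_ne _ τ fun x hx h => hy (by simp_all)
  calc Nat.card {σ : Perm (Option α) // σ.IsSeparating (D.map .some)}
      = ∑ p : Option α, Nat.card {τ : Perm α //
          (decomposeOption.symm (p, τ)).IsSeparating (D.map .some)} := by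
        rw [← Nat.card_sigma]
        exact Nat.card_congr <| (decomposeOption.subtypeEquiv fun σ => by simp).trans
          (subtypeProdEquivSigmaSubtype fun p τ => (decomposeOption.symm (p, τ)).IsSeparating _)
    _ = N + ∑ y : α, (N + if y ∈ D then
          Nat.card {τ : Perm α // τ y = y ∧ τ.IsSeparating (D.erase y)} else 0) := by
        rw [Fintype.sum_option, Finset.sum_congr rfl fun y _ => hfibre y]
        congr 1
        exact Nat.card_congr (subtypeEquivRight fun τ =>
          isSeparating_decomposeOption_symm_iff_of_forall_ne _ τ fun x _ h => by simp at h)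
    _ = _ := by
        rw [sum_add_distrib, sum_ite_mem, univ_inter, sum_const, card_univ, smul_eq_mul]
        ring

theorem card_isSeparating [Fintype α] [DecidableEq α] {D : Finset α} {n r : ℕ}
    (hα : Fintype.card α = n + r) (hD : #D = r) :
    Nat.card {σ : Perm α // σ.IsSeparating D} = n ! * n.choose r := by
  induction n generalizing α r with
  | zero =>
    obtain rfl : D = univ := eq_univ_of_card D (by omega)
    rcases r with _ | r
    · have : IsEmpty α := Fintype.card_eq_zero_iff.1 hα
      rw [Nat.factorial_zero, Nat.choose_self, Nat.card_eq_one_iff_unique]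
      exact ⟨inferInstance, ⟨⟨1, by simp [IsSeparating]⟩⟩⟩
    · have : Nonempty α := Fintype.card_pos_iff.1 (by omega)
      have : IsEmpty {σ : Perm α // σ.IsSeparating univ} :=
        ⟨fun ⟨σ, hσ⟩ => hσ.apply_notMem (mem_univ (Classical.arbitrary α)) (mem_univ _)⟩
      simp
  | succ n ih =>
    obtain ⟨a, ha⟩ : ∃ a, a ∉ D := by
      by_contra! h
      rw [eq_univ_of_forall h, card_univ] at hD
      omega
    set D' := D.subtype (· ≠ a)
    have hD' : #D' = r := by
      rw [card_subtype, filter_true_of_mem fun x hx => ne_of_mem_of_not_mem hx ha, hD]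
    have hcard : ∀ y ∈ D', Nat.card {τ : Perm {x // x ≠ a} //
        τ y = y ∧ τ.IsSeparating (D'.erase y)} = n ! * n.choose (r - 1) := by
      intro y hy
      have hr : 1 ≤ r := hD' ▸ card_pos.2 ⟨y, hy⟩
      rw [card_isSeparating_fixing]
      refine ih ?_ ?_
      · simp only [ne_eq, Fintype.card_subtype_compl, hα, Fintype.card_unique,
          Nat.succ_add_sub_one]
        omega
      · rw [card_subtype, filter_ne', card_erase_of_mem hy, hD']
    rw [← card_isSeparating_congr (optionSubtypeNe a) (D := D'.map .some) fun x => ?_,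
      card_isSeparating_option, ih (by simp [hα]) hD', sum_congr rfl hcard, sum_const, hD',
      smul_eq_mul, Fintype.card_subtype_compl]
    · rw [Fintype.card_subtype_eq, hα, show n + 1 + r - 1 + 1 = n + r + 1 by omega,
        Nat.succ_factorial_mul_choose]
    · cases x <;> simp [D', ha]

end Equiv.Perm

theorem card_distinguished_nonfixed_distinct_cycles_general (r n : ℕ) :
    Nat.card {σ : Equiv.Perm (Fin (n + r)) //
        (∀ i : Fin (n + r), (i : ℕ) < r → σ i ≠ i) ∧
        ∀ i j : Fin (n + r), (i : ℕ) < r → (j : ℕ) < r → i ≠ j → ¬ σ.SameCycle i j} =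
      n.factorial / r.factorial * n.descFactorial r := by
  have hD : #{i : Fin (n + r) | (i : ℕ) < r} = r := by simp [Fin.card_filter_val_lt]
  rw [Nat.factorial_div_factorial_mul_descFactorial,
    ← Equiv.Perm.card_isSeparating (Fintype.card_fin _) hD]
  exact Nat.card_congr (Equiv.subtypeEquivRight fun σ => by
    simp only [Equiv.Perm.IsSeparating, Set.Pairwise, coe_filter, Set.mem_ofPred_eq, mem_filter,
      mem_univ, true_and]
    exact and_congr_right' ⟨fun h i hi j hj => h i j hi hj, fun h i j hi hj => h hi hj⟩)

theorem card_distinguished_nonfixed_distinct_cycles (r n : ℕ) (hr : 1 ≤ r) (hn : r ≤ n) :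
    Nat.card {σ : Equiv.Perm (Fin (n + r)) //
        (∀ i : Fin (n + r), (i : ℕ) < r → σ i ≠ i) ∧
        ∀ i j : Fin (n + r), (i : ℕ) < r → (j : ℕ) < r → i ≠ j → ¬ σ.SameCycle i j} =
      n.factorial / r.factorial * n.descFactorial r :=
  card_distinguished_nonfixed_distinct_cycles_general r n
end

section
/- Define, for n ∈ ℕ, the polynomial P_n(X) = Σ_{j=0}^{n} (j+X)_j·C(n,j)·(-1)^{n-j} ∈ ℤ[X], where (x)_j = x(x-1)···(x-j+1) is the falling factorial and (x)_0 = 1. Then for all r, n ∈ ℕ, D_r(n+r) = (n+r)_r · P_n(r). -/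
/-- The polynomial `P_n(X) = Σ_{j=0}^{n} (j+X)_j · C(n,j) · (-1)^{n-j}`, where the falling
factorial `(j+X)_j = (X+j)(X+j-1)⋯(X+1)` is expressed as `∏_{i=1}^{j} (X+i)`. -/
noncomputable def Ppoly (n : ℕ) : Polynomial ℤ :=
  ∑ j ∈ Finset.range (n + 1),
    Polynomial.C (((-1) ^ (n - j) * n.choose j : ℤ)) *
      ∏ i ∈ Finset.Icc 1 j, (Polynomial.X + Polynomial.C (i : ℤ))


open Finset Equiv Equiv.Perm Nat

section CardPermEqOn
variable {β : Type*} [Fintype β] [DecidableEq β]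

theorem card_perm_eqOn (P : Finset β) (u : β → β) (hu : Set.InjOn u P) :
    (univ.filter fun g : Perm β => ∀ x ∈ P, g x = u x).card
      = (Fintype.card β - P.card) ! := by
  classical
  induction P using Finset.induction_on generalizing u with
  | empty => simp [Fintype.card_perm]
  | @insert a P ha ih =>
    have huP : Set.InjOn u P := hu.mono (by simp [Finset.coe_insert, Set.subset_insert])
    have hua : u a ∉ P.image u := by
      simp only [mem_image, not_exists]
      rintro x ⟨hx', hxe⟩
      have : x = a := hu (by simp [hx']) (by simp) hxe
      exact ha (this ▸ hx')
    -- fiberwise over value at a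
    have hmaps : ∀ g ∈ (univ.filter fun g : Perm β => ∀ x ∈ P, g x = u x),
        g a ∈ (P.image u)ᶜ := by
      intro g hg
      simp only [mem_filter] at hg
      simp only [mem_compl, mem_image, not_exists]
      rintro x ⟨hx', hxe⟩
      have hxa : x = a := g.injective (show g x = g a by rw [hg.2 x hx']; exact hxe)
      exact ha (hxa ▸ hx')
    have hfib := Finset.card_eq_sum_card_fiberwise hmaps
    -- all fibers over v ∈ (P.image u)ᶜ have the same card as the fiber over u a
    have hsame : ∀ v ∈ (P.image u)ᶜ,
        ((univ.filter fun g : Perm β => ∀ x ∈ P, g x = u x).filter fun g => g a = v).card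
          = ((univ.filter fun g : Perm β => ∀ x ∈ P, g x = u x).filter
              fun g => g a = u a).card := by
      intro v hv
      simp only [mem_compl, mem_image, not_exists] at hv
      apply Finset.card_bij' (fun g _ => Equiv.swap v (u a) * g)
        (fun g _ => Equiv.swap v (u a) * g)
      · intro g hg
        simp only [mem_filter, mem_univ, true_and, Perm.mul_apply] at hg ⊢
        refine ⟨fun x hx => ?_, ?_⟩
        · rw [hg.1 x hx, Equiv.swap_apply_of_ne_of_ne]
          · intro h; exact hv x ⟨hx, h⟩
          · intro h; exact hua (mem_image.2 ⟨x, hx, h⟩)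
        · rw [hg.2, Equiv.swap_apply_left]
      · intro g hg
        simp only [mem_filter, mem_univ, true_and, Perm.mul_apply] at hg ⊢
        refine ⟨fun x hx => ?_, ?_⟩
        · rw [hg.1 x hx, Equiv.swap_apply_of_ne_of_ne]
          · intro h; exact hv x ⟨hx, h⟩
          · intro h; exact hua (mem_image.2 ⟨x, hx, h⟩)
        · rw [hg.2, Equiv.swap_apply_right]
      · intro g _; ext x; simp [← mul_assoc]
      · intro g _; ext x; simp [← mul_assoc]
    have hcardc : (P.image u)ᶜ.card = Fintype.card β - P.card := by
      rw [card_compl, Finset.card_image_of_injOn huP]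
    have hins : a ∉ (P : Set β) := by simpa using ha
    have hPle : P.card < Fintype.card β := by
      have := Finset.card_le_card (Finset.subset_univ (insert a P))
      rw [Finset.card_insert_of_notMem ha, Finset.card_univ] at this
      omega
    have hsum : (univ.filter fun g : Perm β => ∀ x ∈ P, g x = u x).card
        = (Fintype.card β - P.card) *
          ((univ.filter fun g : Perm β => ∀ x ∈ P, g x = u x).filter
            fun g => g a = u a).card := by
      rw [hfib, Finset.sum_congr rfl hsame, Finset.sum_const, hcardc, smul_eq_mul]
    have hset : ((univ.filter fun g : Perm β => ∀ x ∈ P, g x = u x).filter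
        fun g => g a = u a) = (univ.filter fun g : Perm β => ∀ x ∈ insert a P, g x = u x) := by
      ext g
      simp only [mem_filter, mem_univ, true_and, Finset.mem_insert]
      constructor
      · rintro ⟨h1, h2⟩ x (rfl | hx); exacts [h2, h1 x hx]
      · intro h; exact ⟨fun x hx => h x (Or.inr hx), h a (Or.inl rfl)⟩
    rw [ih u huP, hset] at hsum
    have hfac : (Fintype.card β - P.card) = (Fintype.card β - (insert a P).card) + 1 := by
      rw [Finset.card_insert_of_notMem ha]; omega
    rw [hfac, Nat.factorial_succ] at hsum
    have hpos : 0 < (Fintype.card β - (insert a P).card) + 1 := Nat.succ_pos _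
    exact (Nat.eq_of_mul_eq_mul_left hpos hsum.symm)

end CardPermEqOn

theorem card_special (r n : ℕ) :
    (univ.filter fun x : Fin (n + r + r) => (x : ℕ) < r).card = r := by
  have h : (univ.filter fun x : Fin (n + r + r) => (x : ℕ) < r).card
      = (Finset.range r).card := by
    apply Finset.card_bij (fun (x : Fin (n + r + r)) _ => (x : ℕ))
    · intro x hx; simp only [mem_filter] at hx; exact Finset.mem_range.2 hx.2
    · intro x hx y hy h; exact Fin.ext h
    · intro a ha
      exact ⟨⟨a, by have := Finset.mem_range.1 ha; omega⟩,
        Finset.mem_filter.2 ⟨Finset.mem_univ _, Finset.mem_range.1 ha⟩, rfl⟩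
  rw [h, Finset.card_range]

theorem card_nonspecial (r n : ℕ) :
    (univ.filter fun x : Fin (n + r + r) => ¬ (x : ℕ) < r).card = n + r := by
  have h : (univ.filter fun x : Fin (n + r + r) => ¬ (x : ℕ) < r).card
      = (Finset.range (n + r)).card := by
    apply Finset.card_bij (fun (x : Fin (n + r + r)) _ => (x : ℕ) - r)
    · intro x hx; simp only [mem_filter] at hx
      have := x.2; exact Finset.mem_range.2 (by omega)
    · intro x hx y hy h
      simp only [mem_filter] at hx hy
      exact Fin.ext (by omega)
    · intro a ha
      have := Finset.mem_range.1 ha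
      exact ⟨⟨a + r, by omega⟩, Finset.mem_filter.2 ⟨Finset.mem_univ _, by simp⟩, by simp⟩
  rw [h, Finset.card_range]

theorem card_Afix (r n : ℕ) (F : Finset (Fin (n + r + r)))
    (hF : ∀ x ∈ F, ¬ (x : ℕ) < r) :
    (univ.filter fun g : Perm (Fin (n + r + r)) =>
        (∀ x : Fin (n + r + r), (x : ℕ) < r → ¬ ((g x : ℕ) < r)) ∧ ∀ x ∈ F, g x = x).card
      = (n + r - F.card).descFactorial r * (n + r - F.card) ! := by
  have hFcard : F.card ≤ n + r := by
    have h1 := Finset.card_le_card (show F ⊆ univ.filter (fun x : Fin (n + r + r) => ¬ (x : ℕ) < r)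
      from fun x hx => Finset.mem_filter.2 ⟨Finset.mem_univ _, hF x hx⟩)
    rwa [card_nonspecial r n] at h1
  set embr : Fin r → Fin (n + r + r) := fun i => ⟨(i : ℕ), by have := i.2; omega⟩ with hembr
  set T : Finset (Fin r → Fin (n + r + r)) := univ.filter
    (fun t => Function.Injective t ∧ ∀ i, ¬ ((t i : ℕ) < r) ∧ t i ∉ F) with hT
  have hmaps : ∀ g ∈ (univ.filter fun g : Perm (Fin (n + r + r)) =>
      (∀ x : Fin (n + r + r), (x : ℕ) < r → ¬ ((g x : ℕ) < r)) ∧ ∀ x ∈ F, g x = x),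
      (fun i => g (embr i)) ∈ T := by
    intro g hg
    simp only [mem_filter, mem_univ, true_and] at hg
    refine Finset.mem_filter.2 ⟨Finset.mem_univ _, fun i j h => ?_, fun i => ⟨?_, ?_⟩⟩
    · have := g.injective h
      simpa [hembr, Fin.ext_iff] using congrArg Fin.val this
    · exact hg.1 _ (by simp [hembr])
    · intro hmem
      have hmem' : g (embr i) ∈ F := hmem
      have h0 : g (g (embr i)) = g (embr i) := by rw [hg.2 _ hmem']
      have h2 := g.injective h0
      exact hF _ hmem' (by rw [h2]; simp [hembr])
  rw [Finset.card_eq_sum_card_fiberwise hmaps]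
  have hfib : ∀ t ∈ T, ((univ.filter fun g : Perm (Fin (n + r + r)) =>
      (∀ x : Fin (n + r + r), (x : ℕ) < r → ¬ ((g x : ℕ) < r)) ∧ ∀ x ∈ F, g x = x).filter
        fun g => (fun i => g (embr i)) = t).card = (n + r - F.card) ! := by
    intro t ht
    simp only [hT, mem_filter, mem_univ, true_and] at ht
    set P : Finset (Fin (n + r + r)) := F ∪ (univ.filter fun x : Fin (n + r + r) => (x : ℕ) < r)
      with hP
    have hPcard : P.card = F.card + r := by
      rw [hP, Finset.card_union_of_disjoint, card_special r n]
      exact Finset.disjoint_left.2 (fun x hx hx2 => hF x hx (Finset.mem_filter.1 hx2).2)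
    have huinj : Set.InjOn
        (fun x : Fin (n + r + r) => if h : (x : ℕ) < r then t ⟨(x : ℕ), h⟩ else x) P := by
      intro x hx y hy hxy
      simp only at hxy
      by_cases h1 : (x : ℕ) < r <;> by_cases h2 : (y : ℕ) < r
      · rw [dif_pos h1, dif_pos h2] at hxy
        have := ht.1 hxy
        simpa [Fin.ext_iff] using congrArg Fin.val this
      · rw [dif_pos h1, dif_neg h2] at hxy
        exfalso
        have hyF : y ∈ F := by
          rcases Finset.mem_union.1 hy with h | h
          · exact h
          · exact absurd (Finset.mem_filter.1 h).2 h2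
        exact (ht.2 _).2 (hxy ▸ hyF)
      · rw [dif_neg h1, dif_pos h2] at hxy
        exfalso
        have hxF : x ∈ F := by
          rcases Finset.mem_union.1 hx with h | h
          · exact h
          · exact absurd (Finset.mem_filter.1 h).2 h1
        exact (ht.2 _).2 (hxy ▸ hxF)
      · rwa [dif_neg h1, dif_neg h2] at hxy
    have hsets : ((univ.filter fun g : Perm (Fin (n + r + r)) =>
        (∀ x : Fin (n + r + r), (x : ℕ) < r → ¬ ((g x : ℕ) < r)) ∧ ∀ x ∈ F, g x = x).filter
          fun g => (fun i => g (embr i)) = t)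
        = (univ.filter fun g : Perm (Fin (n + r + r)) =>
            ∀ x ∈ P, g x = if h : (x : ℕ) < r then t ⟨(x : ℕ), h⟩ else x) := by
      ext g
      simp only [mem_filter, mem_univ, true_and]
      constructor
      · rintro ⟨⟨hsp, hfix⟩, hmap⟩ x hx
        by_cases h : (x : ℕ) < r
        · have h3 : g (embr ⟨(x : ℕ), h⟩) = t ⟨(x : ℕ), h⟩ := congrFun hmap _
          have hex : embr ⟨(x : ℕ), h⟩ = x := by simp [hembr, Fin.ext_iff]
          rw [dif_pos h, ← h3, hex]
        · have hxF : x ∈ F := by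
            rcases Finset.mem_union.1 hx with h' | h'
            · exact h'
            · exact absurd (Finset.mem_filter.1 h').2 h
          rw [dif_neg h]; exact hfix x hxF
      · intro hK
        refine ⟨⟨fun x hx => ?_, fun x hx => ?_⟩, ?_⟩
        · have hxP : x ∈ P :=
            Finset.mem_union.2 (Or.inr (Finset.mem_filter.2 ⟨Finset.mem_univ _, hx⟩))
          rw [hK x hxP, dif_pos hx]
          exact (ht.2 _).1
        · have hxP : x ∈ P := Finset.mem_union.2 (Or.inl hx)
          rw [hK x hxP, dif_neg (hF x hx)]
        · funext i
          have hiP : embr i ∈ P := Finset.mem_union.2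
            (Or.inr (Finset.mem_filter.2 ⟨Finset.mem_univ _, by simp [hembr]⟩))
          rw [hK _ hiP,
            dif_pos (show ((embr i : Fin (n + r + r)) : ℕ) < r by simp [hembr])]
    rw [hsets]
    have hK := card_perm_eqOn P
      (fun x : Fin (n + r + r) => if h : (x : ℕ) < r then t ⟨(x : ℕ), h⟩ else x) huinj
    rw [Fintype.card_fin, hPcard] at hK
    have harith : n + r + r - (F.card + r) = n + r - F.card := by omega
    rw [harith] at hK
    convert hK using 2
    ext g
    simp
  rw [Finset.sum_congr rfl hfib, Finset.sum_const, smul_eq_mul]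
  congr 1
  set W : Finset (Fin (n + r + r)) := (univ.filter fun x : Fin (n + r + r) => ¬ (x : ℕ) < r) \ F
    with hW
  have hWcard : W.card = n + r - F.card := by
    rw [hW, Finset.card_sdiff_of_subset, card_nonspecial r n]
    exact fun x hx => Finset.mem_filter.2 ⟨Finset.mem_univ _, hF x hx⟩
  have hTW : T.card = Fintype.card (Fin r ↪ ↥W) := by
    rw [← Finset.card_univ]
    apply Finset.card_bij (fun t ht => (⟨fun i => (⟨t i, by
        have h5 := Finset.mem_filter.1 ht
        exact Finset.mem_sdiff.2 ⟨Finset.mem_filter.2 ⟨Finset.mem_univ _, (h5.2.2 i).1⟩,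
          (h5.2.2 i).2⟩⟩ : ↥W), fun i j h => (Finset.mem_filter.1 ht).2.1
            (by simpa [Subtype.ext_iff] using h)⟩ : Fin r ↪ ↥W))
    · intro t ht; exact Finset.mem_univ _
    · intro t1 h1 t2 h2 heq
      funext i
      have := congrArg (fun (e : Fin r ↪ ↥W) => ((e i : ↥W) : Fin (n + r + r))) heq
      exact this
    · intro e _
      refine ⟨fun i => ((e i : ↥W) : Fin (n + r + r)), Finset.mem_filter.2 ⟨Finset.mem_univ _,
        fun i j h => e.injective (Subtype.ext h), fun i => ?_⟩, ?_⟩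
      · have h2 := (e i).2
        simp only [hW, Finset.mem_sdiff, Finset.mem_filter] at h2
        exact ⟨h2.1.2, h2.2⟩
      · ext i
        simp
  rw [hTW, Fintype.card_embedding_eq, Fintype.card_coe, Fintype.card_fin, hWcard]

theorem step2 (r n : ℕ) :
    (((univ.filter fun g : Perm (Fin (n + r + r)) =>
        (∀ x : Fin (n + r + r), ¬ (x : ℕ) < r → g x ≠ x) ∧
        (∀ x : Fin (n + r + r), (x : ℕ) < r → ¬ ((g x : ℕ) < r))).card : ℕ) : ℤ)
      = ∑ F ∈ (univ.filter fun x : Fin (n + r + r) => ¬ (x : ℕ) < r).powerset,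
          (-1) ^ F.card * (((univ.filter fun g : Perm (Fin (n + r + r)) =>
            (∀ x : Fin (n + r + r), (x : ℕ) < r → ¬ ((g x : ℕ) < r)) ∧
              ∀ x ∈ F, g x = x).card : ℕ) : ℤ) := by
  set B : Finset (Perm (Fin (n + r + r))) := univ.filter
    (fun g => ∀ x : Fin (n + r + r), (x : ℕ) < r → ¬ ((g x : ℕ) < r)) with hB
  set Of : Finset (Fin (n + r + r)) := univ.filter (fun x => ¬ (x : ℕ) < r) with hOf
  have h1 : (univ.filter fun g : Perm (Fin (n + r + r)) =>
      (∀ x : Fin (n + r + r), ¬ (x : ℕ) < r → g x ≠ x) ∧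
      (∀ x : Fin (n + r + r), (x : ℕ) < r → ¬ ((g x : ℕ) < r)))
      = B.filter (fun g => ∀ x ∈ Of, g x ≠ x) := by
    ext g
    simp only [hB, hOf, Finset.filter_filter, mem_filter, mem_univ, true_and]
    tauto
  rw [h1]
  rw [← Finset.sum_boole (s := B) (p := fun g => ∀ x ∈ Of, g x ≠ x)]
  have h3 : ∀ g ∈ B, (if (∀ x ∈ Of, g x ≠ x) then (1 : ℤ) else 0)
      = ∑ F ∈ Of.powerset, (-1) ^ F.card * ∏ x ∈ F, (if g x = x then (1 : ℤ) else 0) := by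
    intro g _
    have hprod : (if (∀ x ∈ Of, g x ≠ x) then (1 : ℤ) else 0)
        = ∏ x ∈ Of, (-(if g x = x then (1 : ℤ) else 0) + 1) := by
      by_cases h : ∀ x ∈ Of, g x ≠ x
      · rw [if_pos h, Finset.prod_eq_one]
        intro x hx
        rw [if_neg (h x hx)]
        ring
      · rw [if_neg h]
        push_neg at h
        obtain ⟨x, hx, hgx⟩ := h
        rw [Finset.prod_eq_zero hx]
        rw [if_pos hgx]
        ring
    rw [hprod, Finset.prod_add]
    apply Finset.sum_congr rfl
    intro F hF
    rw [Finset.prod_const_one, mul_one]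
    calc ∏ x ∈ F, -(if g x = x then (1 : ℤ) else 0)
        = ∏ x ∈ F, ((-1) * (if g x = x then (1 : ℤ) else 0)) := by
          apply Finset.prod_congr rfl; intro x _; ring
      _ = (∏ _x ∈ F, (-1 : ℤ)) * ∏ x ∈ F, (if g x = x then (1 : ℤ) else 0) :=
          Finset.prod_mul_distrib
      _ = (-1) ^ F.card * ∏ x ∈ F, (if g x = x then (1 : ℤ) else 0) := by
          rw [Finset.prod_const]
  rw [Finset.sum_congr rfl h3, Finset.sum_comm]
  apply Finset.sum_congr rfl
  intro F hF
  rw [← Finset.mul_sum]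
  congr 1
  have h4 : (∑ g ∈ B, ∏ x ∈ F, if g x = x then (1 : ℤ) else 0)
      = ((B.filter (fun g => ∀ x ∈ F, g x = x)).card : ℤ) := by
    simp only [Finset.prod_boole]
    convert Finset.sum_boole (R := ℤ) (fun g : Equiv.Perm (Fin (n + r + r)) => ∀ x ∈ F, g x = x) B using 2
    congr 1
  rw [h4]
  have h5 : B.filter (fun g => ∀ x ∈ F, g x = x)
      = (univ.filter fun g : Perm (Fin (n + r + r)) =>
          (∀ x : Fin (n + r + r), (x : ℕ) < r → ¬ ((g x : ℕ) < r)) ∧ ∀ x ∈ F, g x = x) := by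
    ext g
    simp only [hB, Finset.filter_filter, mem_filter, mem_univ, true_and]
  rw [h5]

section Bijection
variable {r n : ℕ}

local notation "α'" => Fin (n + r + r)

-- distinguished elements go to non-distinguished ones
lemma spec_step (σ : Perm (Fin (n + r + r))) (hd : ∀ x, σ x ≠ x)
    (hc : ∀ i j : Fin (n + r + r), (i : ℕ) < r → (j : ℕ) < r → i ≠ j → ¬ σ.SameCycle i j)
    {x : Fin (n + r + r)} (hx : (x : ℕ) < r) : ¬ ((σ x : ℕ) < r) := by
  intro hsp
  exact hc x (σ x) hx hsp (Ne.symm (hd x)) ⟨1, by simp⟩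

lemma forward_orbit (σ : Perm (Fin (n + r + r))) (hd : ∀ x, σ x ≠ x)
    (hc : ∀ i j : Fin (n + r + r), (i : ℕ) < r → (j : ℕ) < r → i ≠ j → ¬ σ.SameCycle i j)
    (π : Perm {x : Fin (n + r + r) // (x : ℕ) < r}) (s : {x : Fin (n + r + r) // (x : ℕ) < r}) :
    ∃ k, 1 ≤ k ∧ (((σ * Equiv.Perm.ofSubtype π) ^ k) (s : Fin (n + r + r))) = ((π s : _) : Fin (n + r + r)) ∧
      ∀ j, 1 ≤ j → j < k → ¬ (((((σ * Equiv.Perm.ofSubtype π) ^ j) (s : Fin (n + r + r))) : ℕ) < r) := by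
  classical
  set x : Fin (n + r + r) := ((π s : _) : Fin (n + r + r)) with hxdef
  have hx : (x : ℕ) < r := (π s).2
  have hex : ∃ m, 0 < m ∧ (σ ^ m) x = x :=
    ⟨orderOf σ, orderOf_pos σ, by rw [pow_orderOf_eq_one]; rfl⟩
  set ℓ := Nat.find hex with hℓdef
  obtain ⟨hℓpos, hℓfix⟩ := Nat.find_spec hex
  rw [← hℓdef] at hℓpos hℓfix
  have hne : ∀ j, 1 ≤ j → j < ℓ → (σ ^ j) x ≠ x := by
    intro j h1 h2 he
    exact Nat.find_min hex h2 ⟨h1, he⟩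
  have hnsp : ∀ j, 1 ≤ j → j < ℓ → ¬ ((((σ ^ j) x) : ℕ) < r) := by
    intro j h1 h2 hsp
    exact hc x ((σ ^ j) x) hx hsp (Ne.symm (hne j h1 h2)) ⟨(j : ℤ), by simp [zpow_natCast]⟩
  have hl2 : 2 ≤ ℓ := by
    by_contra h
    have hone : ℓ = 1 := by omega
    rw [hone, pow_one] at hℓfix
    exact hd x hℓfix
  have key : ∀ j, 1 ≤ j → j ≤ ℓ →
      ((σ * Equiv.Perm.ofSubtype π) ^ j) (s : Fin (n + r + r)) = (σ ^ j) x := by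
    intro j h1
    induction j, h1 using Nat.le_induction with
    | base =>
      intro _
      rw [pow_one, pow_one, Equiv.Perm.mul_apply, Equiv.Perm.ofSubtype_apply_of_mem π s.2]
    | succ j hj1 ih =>
      intro hj
      have hgj := ih (by omega)
      have hnsp' : ¬ ((((σ ^ j) x) : ℕ) < r) := hnsp j hj1 (by omega)
      rw [_root_.pow_succ', Equiv.Perm.mul_apply, hgj, Equiv.Perm.mul_apply,
        Equiv.Perm.ofSubtype_apply_of_not_mem π hnsp', _root_.pow_succ' σ j, Equiv.Perm.mul_apply]
  refine ⟨ℓ, by omega, ?_, ?_⟩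
  · rw [key ℓ (by omega) le_rfl, hℓfix]
  · intro j h1 hj
    rw [key j h1 (le_of_lt hj)]
    exact hnsp j h1 hj

lemma reconstruct (g : Perm (Fin (n + r + r)))
    (hg1 : ∀ x : Fin (n + r + r), ¬ (x : ℕ) < r → g x ≠ x)
    (hg2 : ∀ x : Fin (n + r + r), (x : ℕ) < r → ¬ ((g x : ℕ) < r)) :
    ∃ σ : Perm (Fin (n + r + r)), ∃ π : Perm {x : Fin (n + r + r) // (x : ℕ) < r},
      (∀ x, σ x ≠ x) ∧
      (∀ i j : Fin (n + r + r), (i : ℕ) < r → (j : ℕ) < r → i ≠ j → ¬ σ.SameCycle i j) ∧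
      σ * Equiv.Perm.ofSubtype π = g := by
  classical
  have hex : ∀ s : {x : Fin (n + r + r) // (x : ℕ) < r},
      ∃ m, 0 < m ∧ (((g ^ m) (s : Fin (n + r + r))) : ℕ) < r := fun s =>
    ⟨orderOf g, orderOf_pos g, by rw [pow_orderOf_eq_one]; simpa using s.2⟩
  set k : {x : Fin (n + r + r) // (x : ℕ) < r} → ℕ := fun s => Nat.find (hex s) with hkdef
  have hk : ∀ s, 0 < k s ∧ (((g ^ k s) (s : Fin (n + r + r))) : ℕ) < r := fun s =>
    Nat.find_spec (hex s)
  have hkmin : ∀ s, ∀ j, 0 < j → j < k s →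
      ¬ (((g ^ j) (s : Fin (n + r + r)) : ℕ) < r) := fun s j h1 h2 hsp =>
    Nat.find_min (hex s) h2 ⟨h1, hsp⟩
  set π₀ : {x : Fin (n + r + r) // (x : ℕ) < r} → {x : Fin (n + r + r) // (x : ℕ) < r} :=
    fun s => ⟨(g ^ k s) (s : Fin (n + r + r)), (hk s).2⟩ with hπ₀def
  have helper : ∀ s t, k s ≤ k t → π₀ s = π₀ t → s = t := by
    intro s t hle he
    have hev : (g ^ k s) (s : Fin (n + r + r)) = (g ^ k t) (t : Fin (n + r + r)) :=
      congrArg Subtype.val he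
    rcases eq_or_lt_of_le hle with heq | hlt
    · rw [heq] at hev
      exact Subtype.ext ((g ^ k t).injective hev)
    · exfalso
      have hsplit : (g ^ k t) = (g ^ k s) * (g ^ (k t - k s)) := by
        rw [← pow_add]
        congr 1
        omega
      rw [hsplit, Equiv.Perm.mul_apply] at hev
      have hst := (g ^ k s).injective hev
      exact hkmin t (k t - k s) (by omega) (by have := (hk s).1; omega) (by rw [← hst]; exact s.2)
  have hinj : Function.Injective π₀ := by
    intro s t he
    rcases le_total (k s) (k t) with h | h
    · exact helper s t h he
    · exact (helper t s h he.symm).symm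
  set π : Perm {x : Fin (n + r + r) // (x : ℕ) < r} :=
    Equiv.ofBijective π₀ (Finite.injective_iff_bijective.1 hinj) with hπdef
  have hπ : ∀ s, π s = π₀ s := fun s => rfl
  set σ : Perm (Fin (n + r + r)) := g * (Equiv.Perm.ofSubtype π)⁻¹ with hσdef
  have hσ : ∀ x, σ x = g ((Equiv.Perm.ofSubtype π)⁻¹ x) := fun x => rfl
  have hofinv : (Equiv.Perm.ofSubtype π)⁻¹ = Equiv.Perm.ofSubtype π⁻¹ :=
    (map_inv Equiv.Perm.ofSubtype π).symm
  have hinvap : ∀ (x : Fin (n + r + r)) (hx : (x : ℕ) < r),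
      (Equiv.Perm.ofSubtype π)⁻¹ x = ((π⁻¹ ⟨x, hx⟩ : _) : Fin (n + r + r)) := by
    intro x hx
    rw [hofinv, Equiv.Perm.ofSubtype_apply_of_mem π⁻¹ hx]
  have hinvns : ∀ x : Fin (n + r + r), ¬ (x : ℕ) < r → (Equiv.Perm.ofSubtype π)⁻¹ x = x := by
    intro x hx
    rw [hofinv, Equiv.Perm.ofSubtype_apply_of_not_mem π⁻¹ hx]
  refine ⟨σ, π, ?_, ?_, inv_mul_cancel_right g _⟩
  · -- derangement
    intro x
    by_cases hx : (x : ℕ) < r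
    · have h1 : σ x = g ((π⁻¹ ⟨x, hx⟩ : _) : Fin (n + r + r)) := by rw [hσ, hinvap x hx]
      intro he
      have h2 : ¬ ((g ((π⁻¹ ⟨x, hx⟩ : _) : Fin (n + r + r)) : ℕ) < r) :=
        hg2 _ (π⁻¹ ⟨x, hx⟩).2
      rw [← h1, he] at h2
      exact h2 hx
    · rw [hσ, hinvns x hx]
      exact hg1 x hx
  · -- distinct cycles
    intro i j hi hj hij hsc
    obtain ⟨z, hz⟩ := hsc
    set u : {x : Fin (n + r + r) // (x : ℕ) < r} := π⁻¹ ⟨i, hi⟩ with hudef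
    have hπu : π u = ⟨i, hi⟩ := Equiv.apply_symm_apply π ⟨i, hi⟩
    have hval : (g ^ k u) (u : Fin (n + r + r)) = i := by
      have := congrArg Subtype.val hπu
      rwa [hπ] at this
    set Y : Finset (Fin (n + r + r)) :=
      (Finset.Icc 1 (k u)).image (fun m => (g ^ m) (u : Fin (n + r + r))) with hYdef
    have hkpos := (hk u).1
    have hiY : i ∈ Y := Finset.mem_image.2 ⟨k u, Finset.mem_Icc.2 ⟨hkpos, le_rfl⟩, hval⟩
    have hspY : ∀ y ∈ Y, (y : ℕ) < r → y = i := by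
      intro y hy hysp
      obtain ⟨m, hm, hrfl⟩ := Finset.mem_image.1 hy
      rw [Finset.mem_Icc] at hm
      rcases eq_or_lt_of_le hm.2 with he | hlt
      · rw [← hrfl, he]
        exact hval
      · exact absurd hysp (by rw [← hrfl]; exact hkmin u m (by omega) hlt)
    have hclosed : ∀ y ∈ Y, σ y ∈ Y := by
      intro y hy
      by_cases hysp : (y : ℕ) < r
      · have hyi : y = i := hspY y hy hysp
        have hstep : σ y = (g ^ 1) (u : Fin (n + r + r)) := by
          rw [hyi, hσ, hinvap i hi, pow_one, ← hudef]
        rw [hstep]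
        exact Finset.mem_image.2 ⟨1, Finset.mem_Icc.2 ⟨le_rfl, by omega⟩, rfl⟩
      · obtain ⟨m, hm, hrfl⟩ := Finset.mem_image.1 hy
        rw [Finset.mem_Icc] at hm
        have hmk : m < k u := by
          rcases eq_or_lt_of_le hm.2 with he | h
          · exfalso
            apply hysp
            rw [← hrfl, he]
            rw [hval]
            exact hi
          · exact h
        have hstep : σ y = (g ^ (m + 1)) (u : Fin (n + r + r)) := by
          rw [hσ, hinvns y hysp, ← hrfl, _root_.pow_succ' g m, Equiv.Perm.mul_apply]
        rw [hstep]
        exact Finset.mem_image.2 ⟨m + 1, Finset.mem_Icc.2 ⟨by omega, by omega⟩, rfl⟩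
    have himg : Y.image ⇑σ = Y := by
      apply Finset.eq_of_subset_of_card_le
      · intro w hw
        obtain ⟨y, hy, hrfl⟩ := Finset.mem_image.1 hw
        rw [← hrfl]
        exact hclosed y hy
      · rw [Finset.card_image_of_injective _ σ.injective]
    have hinvY : ∀ y ∈ Y, σ⁻¹ y ∈ Y := by
      intro y hy
      rw [← himg] at hy
      obtain ⟨w, hw, hrfl⟩ := Finset.mem_image.1 hy
      rw [← hrfl, Equiv.Perm.inv_def, Equiv.symm_apply_apply]
      exact hw
    have hall : ∀ w : ℤ, ((σ ^ w) i) ∈ Y := by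
      intro w
      induction w using Int.induction_on with
      | zero => simpa using hiY
      | succ w ih =>
        have hstep : (σ ^ ((w : ℤ) + 1)) i = σ ((σ ^ (w : ℤ)) i) := by
          rw [show ((w : ℤ) + 1) = 1 + w by ring, zpow_add, zpow_one, Equiv.Perm.mul_apply]
        rw [hstep]
        exact hclosed _ ih
      | pred w ih =>
        have hstep : (σ ^ (-(w : ℤ) - 1)) i = σ⁻¹ ((σ ^ (-(w : ℤ))) i) := by
          rw [show (-(w : ℤ) - 1) = (-1) + (-(w : ℤ)) by ring, zpow_add, zpow_neg_one,
            Equiv.Perm.mul_apply]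
        rw [hstep]
        exact hinvY _ ih
    have hjY : j ∈ Y := hz ▸ hall z
    exact hij (hspY j hjY hj).symm


end Bijection

theorem step1 (r n : ℕ) :
    (univ.filter fun σ : Perm (Fin (n + r + r)) =>
      (∀ x, σ x ≠ x) ∧
      ∀ i j : Fin (n + r + r), (i : ℕ) < r → (j : ℕ) < r → i ≠ j → ¬ σ.SameCycle i j).card * r !
    = (univ.filter fun g : Perm (Fin (n + r + r)) =>
        (∀ x : Fin (n + r + r), ¬ (x : ℕ) < r → g x ≠ x) ∧
        (∀ x : Fin (n + r + r), (x : ℕ) < r → ¬ ((g x : ℕ) < r))).card := by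
  classical
  have hSp : Fintype.card {x : Fin (n + r + r) // (x : ℕ) < r} = r := by
    rw [Fintype.card_subtype]
    exact card_special r n
  have hPermSp : Fintype.card (Perm {x : Fin (n + r + r) // (x : ℕ) < r}) = r ! := by
    rw [Fintype.card_perm, hSp]
  rw [← hPermSp, ← Finset.card_univ, ← Finset.card_product]
  apply Finset.card_bij (fun p _ => p.1 * Equiv.Perm.ofSubtype p.2)
  · rintro ⟨σ, π⟩ hp
    rw [Finset.mem_product] at hp
    obtain ⟨hσmem, -⟩ := hp
    rw [Finset.mem_filter] at hσmem
    obtain ⟨-, hd, hc⟩ := hσmem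
    rw [Finset.mem_filter]
    refine ⟨Finset.mem_univ _, ?_, ?_⟩
    · intro x hx
      rw [Equiv.Perm.mul_apply,
        Equiv.Perm.ofSubtype_apply_of_not_mem (p := fun y : Fin (n + r + r) => (y : ℕ) < r) _ hx]
      exact hd x
    · intro x hx
      rw [Equiv.Perm.mul_apply,
        Equiv.Perm.ofSubtype_apply_of_mem (p := fun y : Fin (n + r + r) => (y : ℕ) < r) _ hx]
      exact spec_step σ hd hc (π ⟨x, hx⟩).2
  · rintro ⟨σ₁, π₁⟩ h1 ⟨σ₂, π₂⟩ h2 heq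
    rw [Finset.mem_product, Finset.mem_filter] at h1 h2
    obtain ⟨⟨-, hd1, hc1⟩, -⟩ := h1
    obtain ⟨⟨-, hd2, hc2⟩, -⟩ := h2
    simp only at heq
    have hππ : π₁ = π₂ := by
      apply Equiv.ext
      intro s
      obtain ⟨k₁, hk11, hk12, hk13⟩ := forward_orbit σ₁ hd1 hc1 π₁ s
      obtain ⟨k₂, hk21, hk22, hk23⟩ := forward_orbit σ₂ hd2 hc2 π₂ s
      rw [heq] at hk12 hk13
      rcases lt_trichotomy k₁ k₂ with h | h | h
      · exact absurd (by rw [hk12]; exact (π₁ s).2) (hk23 k₁ hk11 h)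
      · have hvals : ((π₁ s : _) : Fin (n + r + r)) = ((π₂ s : _) : Fin (n + r + r)) := by
          rw [← hk12, ← hk22, h]
        exact Subtype.ext hvals
      · exact absurd (by rw [hk22]; exact (π₂ s).2) (hk13 k₂ hk21 h)
    have hσσ : σ₁ = σ₂ := by
      rw [hππ] at heq
      exact mul_right_cancel heq
    rw [hσσ, hππ]
  · intro g hg
    rw [Finset.mem_filter] at hg
    obtain ⟨-, hg1, hg2⟩ := hg
    obtain ⟨σ, π, hd, hc, hcomp⟩ := reconstruct g hg1 hg2
    exact ⟨(σ, π), Finset.mem_product.2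
      ⟨Finset.mem_filter.2 ⟨Finset.mem_univ _, hd, hc⟩, Finset.mem_univ _⟩, hcomp⟩


lemma key_id (r n b : ℕ) (hb : b ≤ n) :
    (n + r).choose b * (n + r - b).descFactorial r = (n + r).descFactorial r * n.choose b := by
  apply Nat.eq_of_mul_eq_mul_right
    (show 0 < b ! * (n - b)! from Nat.mul_pos (Nat.factorial_pos _) (Nat.factorial_pos _))
  have e1 : (n + r).choose b * (n + r - b).descFactorial r * (b ! * (n - b)!)
      = (n + r).choose b * b ! * ((n - b)! * (n + r - b).descFactorial r) := by ring
  have e2 : (n - b)! * (n + r - b).descFactorial r = (n + r - b)! := by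
    have h := Nat.factorial_mul_descFactorial (show r ≤ n + r - b by omega)
    have : n + r - b - r = n - b := by omega
    rwa [this] at h
  rw [e1, e2]
  have e3 : (n + r).choose b * b ! * (n + r - b)! = (n + r)! :=
    Nat.choose_mul_factorial_mul_factorial (by omega)
  rw [e3]
  have e4 : (n + r).descFactorial r * n.choose b * (b ! * (n - b)!)
      = (n + r).descFactorial r * (n.choose b * b ! * (n - b)!) := by ring
  rw [e4, Nat.choose_mul_factorial_mul_factorial hb]
  have h5 := Nat.factorial_mul_descFactorial (show r ≤ n + r by omega)
  have : n + r - r = n := by omega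
  rw [this] at h5
  rw [← h5]
  ring

lemma prod_Icc_mul_factorial (r : ℕ) : ∀ j : ℕ,
    (∏ i ∈ Finset.Icc 1 j, ((r : ℤ) + i)) * (r ! : ℤ) = ((r + j)! : ℤ)
  | 0 => by simp
  | (j + 1) => by
    rw [Finset.prod_Icc_succ_top (by omega)]
    have ih := prod_Icc_mul_factorial r j
    push_cast
    push_cast at ih
    calc (∏ i ∈ Finset.Icc 1 j, ((r : ℤ) + i)) * ((r : ℤ) + (j + 1)) * (r ! : ℤ)
        = ((∏ i ∈ Finset.Icc 1 j, ((r : ℤ) + i)) * (r ! : ℤ)) * ((r : ℤ) + (j + 1)) := by ring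
      _ = ((r + j)! : ℤ) * ((r : ℤ) + (j + 1)) := by rw [ih]
      _ = _ := by
          have : (r + (j + 1))! = (r + j + 1) * (r + j)! := by
            rw [show r + (j + 1) = (r + j) + 1 by omega, Nat.factorial_succ]
          rw [this]
          push_cast
          ring

theorem rDerangement_eq_poly (r n : ℕ) :
    (rDerangement r (n + r) : ℤ) =
      ((n + r).descFactorial r : ℤ) * (Ppoly n).eval (r : ℤ) := by
  classical
  have hD : rDerangement r (n + r)
      = (univ.filter fun σ : Perm (Fin (n + r + r)) =>
        (∀ x, σ x ≠ x) ∧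
        ∀ i j : Fin (n + r + r), (i : ℕ) < r → (j : ℕ) < r → i ≠ j → ¬ σ.SameCycle i j).card := by
    rw [rDerangement, Nat.card_eq_fintype_card, Fintype.card_subtype]
  -- multiply both sides by r!
  have hcancel : ∀ a b : ℤ, a * (r ! : ℤ) = b * (r ! : ℤ) → a = b := by
    intro a b h
    exact mul_right_cancel₀ (by exact_mod_cast Nat.factorial_ne_zero r) h
  apply hcancel
  rw [hD]
  have hS1 := step1 r n
  have hcast : ((univ.filter fun σ : Perm (Fin (n + r + r)) =>
      (∀ x, σ x ≠ x) ∧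
      ∀ i j : Fin (n + r + r), (i : ℕ) < r → (j : ℕ) < r → i ≠ j → ¬ σ.SameCycle i j).card : ℤ)
        * (r ! : ℤ)
      = ((univ.filter fun g : Perm (Fin (n + r + r)) =>
        (∀ x : Fin (n + r + r), ¬ (x : ℕ) < r → g x ≠ x) ∧
        (∀ x : Fin (n + r + r), (x : ℕ) < r → ¬ ((g x : ℕ) < r))).card : ℤ) := by
    exact_mod_cast congrArg (fun k : ℕ => (k : ℤ)) hS1
  rw [hcast, step2 r n]
  -- evaluate each Afix card
  have hA : ∀ F ∈ (univ.filter fun x : Fin (n + r + r) => ¬ (x : ℕ) < r).powerset,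
      (-1 : ℤ) ^ F.card * (((univ.filter fun g : Perm (Fin (n + r + r)) =>
          (∀ x : Fin (n + r + r), (x : ℕ) < r → ¬ ((g x : ℕ) < r)) ∧
            ∀ x ∈ F, g x = x).card : ℕ) : ℤ)
        = (-1) ^ F.card * (((n + r - F.card).descFactorial r * (n + r - F.card)! : ℕ) : ℤ) := by
    intro F hF
    rw [card_Afix r n F (fun x hx =>
      (Finset.mem_filter.1 (Finset.mem_powerset.1 hF hx)).2)]
  rw [Finset.sum_congr rfl hA]
  -- group by cardinality
  rw [Finset.powerset_card_biUnion, Finset.sum_biUnion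
    ((Finset.pairwise_disjoint_powersetCard _).set_pairwise _), card_nonspecial r n]
  have hgrp : ∀ b ∈ Finset.range (n + r + 1),
      (∑ F ∈ Finset.powersetCard b (univ.filter fun x : Fin (n + r + r) => ¬ (x : ℕ) < r),
        (-1 : ℤ) ^ F.card * (((n + r - F.card).descFactorial r * (n + r - F.card)! : ℕ) : ℤ))
      = ((n + r).choose b : ℤ) *
          ((-1) ^ b * (((n + r - b).descFactorial r * (n + r - b)! : ℕ) : ℤ)) := by
    intro b _
    have hcst : ∀ F ∈ Finset.powersetCard b
        (univ.filter fun x : Fin (n + r + r) => ¬ (x : ℕ) < r),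
        (-1 : ℤ) ^ F.card * (((n + r - F.card).descFactorial r * (n + r - F.card)! : ℕ) : ℤ)
        = (-1) ^ b * (((n + r - b).descFactorial r * (n + r - b)! : ℕ) : ℤ) := by
      intro F hF
      rw [(Finset.mem_powersetCard.1 hF).2]
    rw [Finset.sum_congr rfl hcst, Finset.sum_const, Finset.card_powersetCard,
      card_nonspecial r n, nsmul_eq_mul]
  rw [Finset.sum_congr rfl hgrp]
  -- truncate the sum to range (n+1)
  have htrunc : ∑ b ∈ Finset.range (n + r + 1), ((n + r).choose b : ℤ) *
        ((-1) ^ b * (((n + r - b).descFactorial r * (n + r - b)! : ℕ) : ℤ))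
      = ∑ b ∈ Finset.range (n + 1), ((n + r).choose b : ℤ) *
        ((-1) ^ b * (((n + r - b).descFactorial r * (n + r - b)! : ℕ) : ℤ)) := by
    symm
    refine Finset.sum_subset (Finset.range_subset_range.2 (by omega)) ?_
    intro b hb1 hb
    simp only [Finset.mem_range, not_lt] at hb1 hb
    have : (n + r - b).descFactorial r = 0 :=
      Nat.descFactorial_eq_zero_iff_lt.2 (by omega)
    rw [this]
    push_cast
    ring
  rw [htrunc]
  -- termwise rewrite with key_id, then reflect
  have hterm : ∀ b ∈ Finset.range (n + 1), ((n + r).choose b : ℤ) *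
        ((-1) ^ b * (((n + r - b).descFactorial r * (n + r - b)! : ℕ) : ℤ))
      = (-1 : ℤ) ^ b * (((n + r).descFactorial r : ℕ) : ℤ) * ((n.choose b : ℕ) : ℤ)
          * (((n + r - b)! : ℕ) : ℤ) := by
    intro b hb
    have hb' : b ≤ n := by simpa [Nat.lt_succ_iff] using Finset.mem_range.1 hb
    have h := key_id r n b hb'
    have hz : (((n + r).choose b : ℕ) : ℤ) * (((n + r - b).descFactorial r : ℕ) : ℤ)
        = (((n + r).descFactorial r : ℕ) : ℤ) * ((n.choose b : ℕ) : ℤ) := by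
      exact_mod_cast congrArg (fun k : ℕ => (k : ℤ)) h
    push_cast
    push_cast at hz
    linear_combination ((-1 : ℤ) ^ b * ((n + r - b)! : ℤ)) * hz
  rw [Finset.sum_congr rfl hterm]
  -- reflect the sum
  have hrefl := Finset.sum_range_reflect (fun b =>
    (-1 : ℤ) ^ b * (((n + r).descFactorial r : ℕ) : ℤ) * ((n.choose b : ℕ) : ℤ)
      * (((n + r - b)! : ℕ) : ℤ)) (n + 1)
  rw [← hrefl]
  -- now compute the RHS
  have hEval : (Ppoly n).eval (r : ℤ)
      = ∑ j ∈ Finset.range (n + 1), ((-1 : ℤ) ^ (n - j) * (n.choose j : ℤ))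
          * ∏ i ∈ Finset.Icc 1 j, ((r : ℤ) + (i : ℤ)) := by
    rw [Ppoly, Polynomial.eval_finset_sum]
    apply Finset.sum_congr rfl
    intro j _
    rw [Polynomial.eval_mul, Polynomial.eval_C, Polynomial.eval_prod]
    congr 1
    apply Finset.prod_congr rfl
    intro i _
    rw [Polynomial.eval_add, Polynomial.eval_X, Polynomial.eval_C]
  rw [hEval, Finset.mul_sum, Finset.sum_mul]
  apply Finset.sum_congr rfl
  intro j hj
  have hj' : j ≤ n := by simpa [Nat.lt_succ_iff] using Finset.mem_range.1 hj
  have h1 : n + 1 - 1 - j = n - j := by omega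
  rw [h1]
  rw [Nat.choose_symm hj', show n + r - (n - j) = r + j by omega]
  have h3 := prod_Icc_mul_factorial r j
  push_cast
  push_cast at h3
  linear_combination (-((-1 : ℤ) ^ (n - j) * ((n + r).descFactorial r : ℤ)
    * (n.choose j : ℤ))) * h3
end

section
/- Define, for n ∈ ℕ, the polynomial P_n(X) = Σ_{j=0}^{n} (j+X)_j·C(n,j)·(-1)^{n-j} ∈ ℤ[X], where (x)_j = x(x-1)···(x-j+1) is the falling factorial and (x)_0 = 1. Then P_0(X) = 1 and for every n > 0, P_n(X) = (X+1)·P_{n-1}(X+1) − P_{n-1}(X). -/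
/-! With the linear operator `T p = (X + 1) * p(X + 1)` on polynomials, `T^j 1 = (X+1)(X+2)⋯(X+j)`
is the `j`-th term of `P_n`, so the binomial theorem gives `P_n = (T - 1)^n 1`. The recurrence is
then `(T - 1)^n = (T - 1) * (T - 1)^(n-1)`. -/

open Polynomial Finset

section
variable (R : Type*) [CommSemiring R]

theorem prod_Icc_X_add_C_eq_ascPochhammer_comp (j : ℕ) :
    ∏ i ∈ Icc 1 j, (X + C (i : R)) = (ascPochhammer R j).comp (X + 1) := by
  induction j with
  | zero => simp
  | succ j ih =>
    rw [prod_Icc_succ_top (by omega), ih, ascPochhammer_succ_right, mul_comp, add_comp, X_comp,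
      natCast_comp, Nat.cast_succ, C_add, C_1, map_natCast]
    ring

noncomputable def risingShift : R[X] →ₗ[R] R[X] :=
  LinearMap.mulLeft R (X + 1) ∘ₗ (aeval (X + 1)).toLinearMap

variable {R}

theorem risingShift_apply (p : R[X]) : risingShift R p = (X + 1) * p.comp (X + 1) := by
  simp [risingShift, comp_eq_aeval]

theorem risingShift_ascPochhammer_comp (j : ℕ) :
    risingShift R ((ascPochhammer R j).comp (X + 1)) = (ascPochhammer R (j + 1)).comp (X + 1) := by
  rw [risingShift_apply, ascPochhammer_succ_left, mul_comp, X_comp, comp_assoc]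

theorem risingShift_pow_apply_one (j : ℕ) :
    (risingShift R ^ j) 1 = (ascPochhammer R j).comp (X + 1) := by
  induction j with
  | zero => simp
  | succ j ih => rw [pow_succ', Module.End.mul_apply, ih, risingShift_ascPochhammer_comp]

end

theorem Ppoly_eq_risingShift_sub_one_pow_apply_one (n : ℕ) :
    Ppoly n = ((risingShift ℤ - 1) ^ n) 1 := by
  have hc := Commute.neg_one_right (R := Module.End ℤ ℤ[X]) (risingShift ℤ)
  rw [sub_eq_add_neg, hc.add_pow, LinearMap.sum_apply, Ppoly]
  refine sum_congr rfl fun j _ => ?_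
  have hscalar : (-1 : Module.End ℤ ℤ[X]) ^ (n - j) * (n.choose j : Module.End ℤ ℤ[X]) =
      ((-1) ^ (n - j) * n.choose j : ℤ) • 1 := by
    simp [zsmul_eq_mul]
  rw [prod_Icc_X_add_C_eq_ascPochhammer_comp, ← risingShift_pow_apply_one, C_mul', mul_assoc,
    hscalar, mul_smul_comm, mul_one, LinearMap.smul_apply]

theorem Ppoly_recurrence :
    Ppoly 0 = 1 ∧
      ∀ n : ℕ, 0 < n →
        Ppoly n = (Polynomial.X + 1) * (Ppoly (n - 1)).comp (Polynomial.X + 1) -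
          Ppoly (n - 1) := by
  refine ⟨by simp [Ppoly_eq_risingShift_sub_one_pow_apply_one], fun n hn => ?_⟩
  obtain ⟨m, rfl⟩ := Nat.exists_eq_add_of_lt hn
  simp only [Ppoly_eq_risingShift_sub_one_pow_apply_one, zero_add, Nat.add_sub_cancel, pow_succ',
    Module.End.mul_apply, LinearMap.sub_apply, risingShift_apply, Module.End.one_apply]
end
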